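/- arXiv:2408.06323 — 3 statements merged into one kernel-verified Lean document; each statement's English description precedes it below -/
import Mathlib

section
/- Let Y ~ N(m, σ²) (one-dimensional), ζ ~ Laplace(c) independent of Y, and δ := sign(ζ). Then conditional on (Y + ζ, δ), with A := {y ∈ ℝ : δ y ≤ δ(Y + ζ)}, the random variable Y follows a N(m + δσ²/c, σ²) distribution truncated to A. -/
open MeasureTheory ProbabilityTheory

/-- A probability measure truncated (i.e. conditioned) to the set `A`. -/
noncomputable def truncate {α : Type*} [MeasurableSpace α] (μ : Measure α) (A : Set α) :
    Measure α :=
  (μ A)⁻¹ • μ.restrict A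

/-- The Laplace(c) distribution on ℝ, with density (1/(2c)) exp(-|x|/c). -/
noncomputable def laplaceMeasure (c : ℝ) : Measure ℝ :=
  volume.withDensity fun x => ENNReal.ofReal ((1 / (2 * c)) * Real.exp (-|x| / c))

open Real
open scoped ENNReal NNReal


lemma measurable_realSign : Measurable Real.sign := by
  have h : Real.sign = fun r : ℝ => if r < 0 then (-1:ℝ) else if 0 < r then 1 else 0 := rfl
  rw [h]
  refine Measurable.ite (measurableSet_lt measurable_id measurable_const) measurable_const ?_
  exact Measurable.ite (measurableSet_lt measurable_const measurable_id) measurable_const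
    measurable_const

lemma gaussian_halfline_pos (μ0 : ℝ) {v : ℝ≥0} (hv : v ≠ 0) (δ s : ℝ) :
    gaussianReal μ0 v {y | δ * y ≤ δ * s} ≠ 0 := by
  intro h
  have hvol : volume {y : ℝ | δ * y ≤ δ * s} = 0 :=
    gaussianReal_absolutelyContinuous' μ0 hv h
  rcases le_or_gt 0 δ with hδ | hδ
  · have hsub : Set.Iic s ⊆ {y : ℝ | δ * y ≤ δ * s} :=
      fun y hy => mul_le_mul_of_nonneg_left hy hδ
    have := measure_mono_null hsub hvol
    rw [Real.volume_Iic] at this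
    exact ENNReal.top_ne_zero this
  · have hsub : Set.Ici s ⊆ {y : ℝ | δ * y ≤ δ * s} :=
      fun y hy => mul_le_mul_of_nonpos_left hy hδ.le
    have := measure_mono_null hsub hvol
    rw [Real.volume_Ici] at this
    exact ENNReal.top_ne_zero this

lemma sub_fubini (δ : ℝ) (H : ℝ → ℝ → ℝ≥0∞)
    (hH : Measurable fun p : ℝ × ℝ => H p.1 p.2) :
    ∫⁻ y, ∫⁻ z in {z | 0 < δ * z}, H y (y + z) ∂volume ∂volume
      = ∫⁻ s, ∫⁻ y in {y | δ * y < δ * s}, H y s ∂volume ∂volume := by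
  have hset : MeasurableSet {p : ℝ × ℝ | δ * p.1 < δ * p.2} :=
    measurableSet_lt (measurable_fst.const_mul δ) (measurable_snd.const_mul δ)
  have hsub : ∀ y : ℝ, ∫⁻ z in {z | 0 < δ * z}, H y (y + z) ∂volume
      = ∫⁻ s in {s | δ * y < δ * s}, H y s ∂volume := by
    intro y
    have hmp : MeasurePreserving (fun z : ℝ => y + z) volume volume :=
      measurePreserving_add_left volume y
    have hemb : MeasurableEmbedding (fun z : ℝ => y + z) :=
      (MeasurableEquiv.addLeft y).measurableEmbedding
    have hpre : (fun z : ℝ => y + z) ⁻¹' {s | δ * y < δ * s} = {z | 0 < δ * z} := by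
      ext z
      simp only [Set.mem_preimage, Set.mem_setOf_eq, mul_add]
      exact lt_add_iff_pos_right _
    rw [← hpre]
    exact (hmp.setLIntegral_comp_preimage_emb hemb (H y) _)
  have hms : ∀ y, MeasurableSet {s : ℝ | δ * y < δ * s} :=
    fun y => measurableSet_lt measurable_const (measurable_id.const_mul δ)
  have hmy : ∀ s, MeasurableSet {y : ℝ | δ * y < δ * s} :=
    fun s => measurableSet_lt (measurable_id.const_mul δ) measurable_const
  simp_rw [hsub]
  have hind : ∀ y s : ℝ, Set.indicator {s | δ * y < δ * s} (H y) s
      = Set.indicator {p : ℝ × ℝ | δ * p.1 < δ * p.2} (fun p => H p.1 p.2) (y, s) := by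
    intro y s
    simp only [Set.indicator_apply, Set.mem_setOf_eq]
  have hind2 : ∀ y s : ℝ, Set.indicator {y | δ * y < δ * s} (fun y => H y s) y
      = Set.indicator {p : ℝ × ℝ | δ * p.1 < δ * p.2} (fun p => H p.1 p.2) (y, s) := by
    intro y s
    simp only [Set.indicator_apply, Set.mem_setOf_eq]
  calc ∫⁻ y, ∫⁻ s in {s | δ * y < δ * s}, H y s ∂volume ∂volume
      = ∫⁻ y, ∫⁻ s, Set.indicator {p : ℝ × ℝ | δ * p.1 < δ * p.2}
          (fun p => H p.1 p.2) (y, s) ∂volume ∂volume := by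
        congr 1; ext y
        rw [← lintegral_indicator (hms y)]
        simp_rw [hind]
    _ = ∫⁻ s, ∫⁻ y, Set.indicator {p : ℝ × ℝ | δ * p.1 < δ * p.2}
          (fun p => H p.1 p.2) (y, s) ∂volume ∂volume := by
        refine lintegral_lintegral_swap ?_
        exact (hH.indicator hset).aemeasurable
    _ = ∫⁻ s, ∫⁻ y in {y | δ * y < δ * s}, H y s ∂volume ∂volume := by
        congr 1; ext s
        rw [← lintegral_indicator (hmy s)]
        simp_rw [hind2]

lemma density_key (m σ c : ℝ) (hσ : 0 < σ) (hc : 0 < c) (δ y z : ℝ)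
    (hδ : δ = 1 ∨ δ = -1) (hz : 0 < δ * z) :
    gaussianPDF m (Real.toNNReal (σ ^ 2)) y
        * ENNReal.ofReal ((1 / (2 * c)) * Real.exp (-|z| / c))
      = gaussianPDF (m + δ * σ ^ 2 / c) (Real.toNNReal (σ ^ 2)) y
        * ENNReal.ofReal ((1 / (2 * c)) * Real.exp (δ * (m - (y + z)) / c + σ ^ 2 / (2 * c ^ 2))) := by
  have hvr : ((Real.toNNReal (σ ^ 2)) : ℝ) = σ ^ 2 := Real.coe_toNNReal _ (sq_nonneg σ)
  have habs : |z| = δ * z := by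
    rcases hδ with h | h
    · subst h; rw [one_mul]; exact abs_of_pos (by linarith [hz])
    · subst h
      have : z < 0 := by nlinarith
      rw [abs_of_neg this]; ring
  simp only [gaussianPDF, gaussianPDFReal]
  rw [← ENNReal.ofReal_mul (by positivity), ← ENNReal.ofReal_mul (by positivity)]
  congr 1
  have hcomb : ∀ A B : ℝ, (Real.sqrt (2 * π * (Real.toNNReal (σ ^ 2))))⁻¹ * Real.exp A
      * ((1 / (2 * c)) * Real.exp B)
      = (Real.sqrt (2 * π * (Real.toNNReal (σ ^ 2))))⁻¹ * (1 / (2 * c)) * Real.exp (A + B) := by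
    intro A B; rw [Real.exp_add]; ring
  rw [hcomb, hcomb]
  congr 1
  rw [habs, hvr]
  have hσ2 : σ ^ 2 ≠ 0 := by positivity
  have hc' : c ≠ 0 := ne_of_gt hc
  rcases hδ with h | h <;> subst h <;> congr 1 <;> field_simp <;> ring

lemma measurable_gaussianPDF_param (m σ c : ℝ) (v : ℝ≥0) :
    Measurable fun q : ℝ × ℝ => gaussianPDF (m + q.1 * σ ^ 2 / c) v q.2 := by
  simp only [gaussianPDF, gaussianPDFReal]
  refine Measurable.ennreal_ofReal ?_
  refine Measurable.const_mul ?_ _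
  refine Real.measurable_exp.comp ?_
  refine Measurable.div ?_ measurable_const
  refine Measurable.neg ?_
  refine Measurable.pow ?_ measurable_const
  fun_prop

lemma measurable_C (m σ c δ : ℝ) :
    Measurable fun s : ℝ => ENNReal.ofReal ((1 / (2 * c)) * Real.exp (δ * (m - s) / c + σ ^ 2 / (2 * c ^ 2))) := by
  refine Measurable.ennreal_ofReal ?_
  refine Measurable.const_mul ?_ _
  refine Real.measurable_exp.comp ?_
  fun_prop

lemma main_compute (m σ c : ℝ) (hσ : 0 < σ) (hc : 0 < c) (δ : ℝ) (hδ : δ = 1 ∨ δ = -1)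
    (W : ℝ × ℝ → ℝ≥0∞) (hW : Measurable W) :
    ∫⁻ y, gaussianPDF m (Real.toNNReal (σ ^ 2)) y *
        ∫⁻ z in {z | 0 < δ * z},
          ENNReal.ofReal ((1 / (2 * c)) * Real.exp (-|z| / c)) * W (y, y + z) ∂volume ∂volume
      = ∫⁻ s, ENNReal.ofReal ((1 / (2 * c)) * Real.exp (δ * (m - s) / c + σ ^ 2 / (2 * c ^ 2))) *
          ∫⁻ y in {y | δ * y < δ * s},
            gaussianPDF (m + δ * σ ^ 2 / c) (Real.toNNReal (σ ^ 2)) y * W (y, s) ∂volume ∂volume := by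
  set v : ℝ≥0 := Real.toNNReal (σ ^ 2) with hv_def
  have hzset : MeasurableSet {z : ℝ | 0 < δ * z} :=
    measurableSet_lt measurable_const (measurable_id.const_mul δ)
  have hyset : ∀ s : ℝ, MeasurableSet {y : ℝ | δ * y < δ * s} :=
    fun s => measurableSet_lt (measurable_id.const_mul δ) measurable_const
  -- step 1: push the gaussian density inside and apply the density identity
  have step1 : ∀ y : ℝ, gaussianPDF m v y *
        ∫⁻ z in {z | 0 < δ * z},
          ENNReal.ofReal ((1 / (2 * c)) * Real.exp (-|z| / c)) * W (y, y + z) ∂volume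
      = ∫⁻ z in {z | 0 < δ * z},
          gaussianPDF (m + δ * σ ^ 2 / c) v y *
            (ENNReal.ofReal ((1 / (2 * c)) * Real.exp (δ * (m - (y + z)) / c + σ ^ 2 / (2 * c ^ 2)))
              * W (y, y + z)) ∂volume := by
    intro y
    rw [← lintegral_const_mul' _ _ (by simp [gaussianPDF] : gaussianPDF m v y ≠ ⊤)]
    refine setLIntegral_congr_fun hzset (fun z hz => ?_)
    rw [← mul_assoc, ← mul_assoc, density_key m σ c hσ hc δ y z hδ hz]
  simp_rw [step1]
  rw [sub_fubini δ (fun y s => gaussianPDF (m + δ * σ ^ 2 / c) v y *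
      (ENNReal.ofReal ((1 / (2 * c)) * Real.exp (δ * (m - s) / c + σ ^ 2 / (2 * c ^ 2))) * W (y, s)))
    (by
      refine Measurable.mul ?_ (Measurable.mul ?_ ?_)
      · exact (measurable_gaussianPDF (m + δ * σ ^ 2 / c) v).comp measurable_fst
      · exact (measurable_C m σ c δ).comp measurable_snd
      · exact hW)]
  congr 1
  ext s
  rw [← lintegral_const_mul' _ _ ENNReal.ofReal_ne_top]
  refine setLIntegral_congr_fun (hyset s) (fun y hy => ?_)
  ring

lemma both_sides (m σ c : ℝ) (hσ : 0 < σ) (hc : 0 < c)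
    (k : ℝ × ℝ → ℝ≥0∞) (hk : Measurable k)
    (E : Set ((ℝ × ℝ) × ℝ)) (hE : MeasurableSet E)
    (hpt : ∀ δ : ℝ, (δ = 1 ∨ δ = -1) → ∀ s : ℝ,
      ∫⁻ y in {y | δ * y < δ * s},
          gaussianPDF (m + δ * σ ^ 2 / c) (Real.toNNReal (σ ^ 2)) y
            * Set.indicator E 1 ((s, δ), y) ∂volume
        = ∫⁻ y in {y | δ * y < δ * s},
            gaussianPDF (m + δ * σ ^ 2 / c) (Real.toNNReal (σ ^ 2)) y * k (s, δ) ∂volume) :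
    ∫⁻ y, gaussianPDF m (Real.toNNReal (σ ^ 2)) y *
        ∫⁻ z, ENNReal.ofReal ((1 / (2 * c)) * Real.exp (-|z| / c))
          * Set.indicator E 1 ((y + z, Real.sign z), y) ∂volume ∂volume
      = ∫⁻ y, gaussianPDF m (Real.toNNReal (σ ^ 2)) y *
          ∫⁻ z, ENNReal.ofReal ((1 / (2 * c)) * Real.exp (-|z| / c))
            * k (y + z, Real.sign z) ∂volume ∂volume := by
  have hglmeas : Measurable fun z : ℝ => ENNReal.ofReal ((1 / (2 * c)) * Real.exp (-|z| / c)) := by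
    refine Measurable.ennreal_ofReal (Measurable.const_mul ?_ _)
    exact Real.measurable_exp.comp (by fun_prop)
  have hS1 : MeasurableSet {z : ℝ | 0 < (1:ℝ) * z} :=
    measurableSet_lt measurable_const (measurable_id.const_mul _)
  have hSm : MeasurableSet {z : ℝ | 0 < (-1:ℝ) * z} :=
    measurableSet_lt measurable_const (measurable_id.const_mul _)
  have hsplit : ∀ u : ℝ → ℝ≥0∞,
      ∫⁻ z, u z ∂volume = ∫⁻ z in {z : ℝ | 0 < (1:ℝ) * z}, u z ∂volume
        + ∫⁻ z in {z : ℝ | 0 < (-1:ℝ) * z}, u z ∂volume := by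
    intro u
    have h1 : {z : ℝ | 0 < (1:ℝ) * z} = Set.Ioi 0 := by ext z; simp
    have h2 : {z : ℝ | 0 < (-1:ℝ) * z} = Set.Iio 0 := by
      ext z; simp only [Set.mem_setOf_eq, Set.mem_Iio, neg_mul, one_mul, neg_pos]
    rw [h1, h2]
    have hd : Disjoint (Set.Iio (0:ℝ)) (Set.Ioi 0) := by
      rw [Set.disjoint_left]; intro z h1' h2'; exact absurd (lt_trans h1' h2') (lt_irrefl z)
    rw [add_comm, ← lintegral_union measurableSet_Ioi hd, Set.Iio_union_Ioi]
    rw [← lintegral_add_compl u (MeasurableSet.singleton (0:ℝ)),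
      setLIntegral_measure_zero _ _ Real.volume_singleton, zero_add]
  have inner_eq : ∀ (V W₁ Wm : ℝ → ℝ≥0∞),
      (∀ z, 0 < z → V z = W₁ z) → (∀ z, z < 0 → V z = Wm z) →
      ∫⁻ z, V z ∂volume = ∫⁻ z in {z : ℝ | 0 < (1:ℝ) * z}, W₁ z ∂volume
        + ∫⁻ z in {z : ℝ | 0 < (-1:ℝ) * z}, Wm z ∂volume := by
    intro V W₁ Wm h1 hm
    rw [hsplit V]
    congr 1
    · refine setLIntegral_congr_fun hS1 (fun z hz => ?_)
      exact h1 z (by simpa using hz)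
    · refine setLIntegral_congr_fun hSm (fun z hz => ?_)
      refine hm z ?_
      simp only [Set.mem_setOf_eq, neg_mul, one_mul, neg_pos] at hz
      exact hz
  -- the four W functions
  set WL1 : ℝ × ℝ → ℝ≥0∞ := fun q => Set.indicator E 1 ((q.2, (1:ℝ)), q.1) with hWL1_def
  set WLm : ℝ × ℝ → ℝ≥0∞ := fun q => Set.indicator E 1 ((q.2, (-1:ℝ)), q.1) with hWLm_def
  set WR1 : ℝ × ℝ → ℝ≥0∞ := fun q => k (q.2, (1:ℝ)) with hWR1_def
  set WRm : ℝ × ℝ → ℝ≥0∞ := fun q => k (q.2, (-1:ℝ)) with hWRm_def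
  have hWL1 : Measurable WL1 :=
    (measurable_one.indicator hE).comp ((measurable_snd.prodMk measurable_const).prodMk measurable_fst)
  have hWLm : Measurable WLm :=
    (measurable_one.indicator hE).comp ((measurable_snd.prodMk measurable_const).prodMk measurable_fst)
  have hWR1 : Measurable WR1 := hk.comp (measurable_snd.prodMk measurable_const)
  have hWRm : Measurable WRm := hk.comp (measurable_snd.prodMk measurable_const)
  have haddsplit : ∀ (W₁ Wm : ℝ × ℝ → ℝ≥0∞), Measurable W₁ →
      ∫⁻ y, gaussianPDF m (Real.toNNReal (σ ^ 2)) y *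
          (∫⁻ z in {z : ℝ | 0 < (1:ℝ) * z},
              ENNReal.ofReal ((1 / (2 * c)) * Real.exp (-|z| / c)) * W₁ (y, y + z) ∂volume
            + ∫⁻ z in {z : ℝ | 0 < (-1:ℝ) * z},
                ENNReal.ofReal ((1 / (2 * c)) * Real.exp (-|z| / c)) * Wm (y, y + z) ∂volume) ∂volume
        = (∫⁻ y, gaussianPDF m (Real.toNNReal (σ ^ 2)) y *
            ∫⁻ z in {z : ℝ | 0 < (1:ℝ) * z},
              ENNReal.ofReal ((1 / (2 * c)) * Real.exp (-|z| / c)) * W₁ (y, y + z) ∂volume ∂volume)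
          + ∫⁻ y, gaussianPDF m (Real.toNNReal (σ ^ 2)) y *
              ∫⁻ z in {z : ℝ | 0 < (-1:ℝ) * z},
                ENNReal.ofReal ((1 / (2 * c)) * Real.exp (-|z| / c)) * Wm (y, y + z) ∂volume ∂volume := by
    intro W₁ Wm h1
    simp_rw [mul_add]
    refine lintegral_add_left ?_ _
    refine (measurable_gaussianPDF m _).mul ?_
    exact Measurable.lintegral_prod_right'
      (f := fun p : ℝ × ℝ => ENNReal.ofReal ((1 / (2 * c)) * Real.exp (-|p.2| / c)) * W₁ (p.1, p.1 + p.2))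
      (ν := volume.restrict {z : ℝ | 0 < (1:ℝ) * z})
      ((hglmeas.comp measurable_snd).mul
        (h1.comp (measurable_fst.prodMk (measurable_fst.add measurable_snd))))
  calc ∫⁻ y, gaussianPDF m (Real.toNNReal (σ ^ 2)) y *
        ∫⁻ z, ENNReal.ofReal ((1 / (2 * c)) * Real.exp (-|z| / c))
          * Set.indicator E 1 ((y + z, Real.sign z), y) ∂volume ∂volume
      = ∫⁻ y, gaussianPDF m (Real.toNNReal (σ ^ 2)) y *
          (∫⁻ z in {z : ℝ | 0 < (1:ℝ) * z},
              ENNReal.ofReal ((1 / (2 * c)) * Real.exp (-|z| / c)) * WL1 (y, y + z) ∂volume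
            + ∫⁻ z in {z : ℝ | 0 < (-1:ℝ) * z},
                ENNReal.ofReal ((1 / (2 * c)) * Real.exp (-|z| / c)) * WLm (y, y + z) ∂volume) ∂volume := by
        refine lintegral_congr fun y => ?_
        congr 1
        refine inner_eq _ _ _ (fun z hz => ?_) (fun z hz => ?_)
        · rw [Real.sign_of_pos hz]
        · rw [Real.sign_of_neg hz]
    _ = (∫⁻ y, gaussianPDF m (Real.toNNReal (σ ^ 2)) y *
            ∫⁻ z in {z : ℝ | 0 < (1:ℝ) * z},
              ENNReal.ofReal ((1 / (2 * c)) * Real.exp (-|z| / c)) * WL1 (y, y + z) ∂volume ∂volume)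
          + ∫⁻ y, gaussianPDF m (Real.toNNReal (σ ^ 2)) y *
              ∫⁻ z in {z : ℝ | 0 < (-1:ℝ) * z},
                ENNReal.ofReal ((1 / (2 * c)) * Real.exp (-|z| / c)) * WLm (y, y + z) ∂volume ∂volume :=
        haddsplit WL1 WLm hWL1
    _ = (∫⁻ s, ENNReal.ofReal ((1 / (2 * c)) * Real.exp ((1:ℝ) * (m - s) / c + σ ^ 2 / (2 * c ^ 2))) *
            ∫⁻ y in {y | (1:ℝ) * y < (1:ℝ) * s},
              gaussianPDF (m + (1:ℝ) * σ ^ 2 / c) (Real.toNNReal (σ ^ 2)) y * WL1 (y, s) ∂volume ∂volume)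
          + ∫⁻ s, ENNReal.ofReal ((1 / (2 * c)) * Real.exp ((-1:ℝ) * (m - s) / c + σ ^ 2 / (2 * c ^ 2))) *
              ∫⁻ y in {y | (-1:ℝ) * y < (-1:ℝ) * s},
                gaussianPDF (m + (-1:ℝ) * σ ^ 2 / c) (Real.toNNReal (σ ^ 2)) y * WLm (y, s) ∂volume ∂volume :=
        congrArg₂ (· + ·) (main_compute m σ c hσ hc 1 (Or.inl rfl) WL1 hWL1)
          (main_compute m σ c hσ hc (-1) (Or.inr rfl) WLm hWLm)
    _ = (∫⁻ s, ENNReal.ofReal ((1 / (2 * c)) * Real.exp ((1:ℝ) * (m - s) / c + σ ^ 2 / (2 * c ^ 2))) *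
            ∫⁻ y in {y | (1:ℝ) * y < (1:ℝ) * s},
              gaussianPDF (m + (1:ℝ) * σ ^ 2 / c) (Real.toNNReal (σ ^ 2)) y * WR1 (y, s) ∂volume ∂volume)
          + ∫⁻ s, ENNReal.ofReal ((1 / (2 * c)) * Real.exp ((-1:ℝ) * (m - s) / c + σ ^ 2 / (2 * c ^ 2))) *
              ∫⁻ y in {y | (-1:ℝ) * y < (-1:ℝ) * s},
                gaussianPDF (m + (-1:ℝ) * σ ^ 2 / c) (Real.toNNReal (σ ^ 2)) y * WRm (y, s) ∂volume ∂volume := by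
        refine congrArg₂ (· + ·) (lintegral_congr fun s => ?_) (lintegral_congr fun s => ?_)
        · exact congrArg _ (hpt 1 (Or.inl rfl) s)
        · exact congrArg _ (hpt (-1) (Or.inr rfl) s)
    _ = (∫⁻ y, gaussianPDF m (Real.toNNReal (σ ^ 2)) y *
            ∫⁻ z in {z : ℝ | 0 < (1:ℝ) * z},
              ENNReal.ofReal ((1 / (2 * c)) * Real.exp (-|z| / c)) * WR1 (y, y + z) ∂volume ∂volume)
          + ∫⁻ y, gaussianPDF m (Real.toNNReal (σ ^ 2)) y *
              ∫⁻ z in {z : ℝ | 0 < (-1:ℝ) * z},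
                ENNReal.ofReal ((1 / (2 * c)) * Real.exp (-|z| / c)) * WRm (y, y + z) ∂volume ∂volume :=
        (congrArg₂ (· + ·) (main_compute m σ c hσ hc 1 (Or.inl rfl) WR1 hWR1)
          (main_compute m σ c hσ hc (-1) (Or.inr rfl) WRm hWRm)).symm
    _ = ∫⁻ y, gaussianPDF m (Real.toNNReal (σ ^ 2)) y *
          ∫⁻ z, ENNReal.ofReal ((1 / (2 * c)) * Real.exp (-|z| / c))
            * k (y + z, Real.sign z) ∂volume ∂volume := by
        rw [← haddsplit WR1 WRm hWR1]
        refine lintegral_congr fun y => ?_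
        congr 1
        refine (inner_eq _ _ _ (fun z hz => ?_) (fun z hz => ?_)).symm
        · rw [Real.sign_of_pos hz]
        · rw [Real.sign_of_neg hz]

lemma measurable_gaussianPDF_param' (m σ c : ℝ) (v : ℝ≥0) :
    Measurable fun q : (ℝ × ℝ) × ℝ => gaussianPDF (m + q.1.2 * σ ^ 2 / c) v q.2 := by
  simp only [gaussianPDF, gaussianPDFReal]
  refine Measurable.ennreal_ofReal ?_
  refine Measurable.const_mul ?_ _
  refine Real.measurable_exp.comp ?_
  refine Measurable.div ?_ measurable_const
  refine Measurable.neg ?_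
  refine Measurable.pow ?_ measurable_const
  fun_prop

noncomputable def fissionKernelFun (m σ c : ℝ) : ℝ × ℝ → Measure ℝ := fun p =>
  truncate (gaussianReal (m + p.2 * σ ^ 2 / c) (Real.toNNReal (σ ^ 2))) {y | p.2 * y ≤ p.2 * p.1}

lemma measurable_fissionKernelFun (m σ c : ℝ) (hv : Real.toNNReal (σ ^ 2) ≠ 0) :
    Measurable (fissionKernelFun m σ c) := by
  refine Measure.measurable_of_measurable_coe _ fun t ht => ?_
  have key : ∀ S : Set ((ℝ × ℝ) × ℝ), MeasurableSet S → Measurable fun p : ℝ × ℝ =>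
      ∫⁻ y in Prod.mk p ⁻¹' S, gaussianPDF (m + p.2 * σ ^ 2 / c) (Real.toNNReal (σ ^ 2)) y ∂volume := by
    intro S hS
    have h1 : ∀ p : ℝ × ℝ,
        ∫⁻ y in Prod.mk p ⁻¹' S, gaussianPDF (m + p.2 * σ ^ 2 / c) (Real.toNNReal (σ ^ 2)) y ∂volume
        = ∫⁻ y, S.indicator
            (fun q => gaussianPDF (m + q.1.2 * σ ^ 2 / c) (Real.toNNReal (σ ^ 2)) q.2) (p, y) ∂volume := by
      intro p
      rw [← lintegral_indicator (hS.preimage measurable_prodMk_left)]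
      refine lintegral_congr fun y => ?_
      by_cases h : (p, y) ∈ S
      · exact (Set.indicator_of_mem (s := Prod.mk p ⁻¹' S) (a := y) h _).trans
          (Set.indicator_of_mem h
            (fun q => gaussianPDF (m + q.1.2 * σ ^ 2 / c) (Real.toNNReal (σ ^ 2)) q.2)).symm
      · exact (Set.indicator_of_notMem (s := Prod.mk p ⁻¹' S) (a := y) h _).trans
          (Set.indicator_of_notMem h
            (fun q => gaussianPDF (m + q.1.2 * σ ^ 2 / c) (Real.toNNReal (σ ^ 2)) q.2)).symm
  -- (continue)
    simp_rw [h1]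
    exact Measurable.lintegral_prod_right' (ν := volume)
      (f := S.indicator
        (fun q => gaussianPDF (m + q.1.2 * σ ^ 2 / c) (Real.toNNReal (σ ^ 2)) q.2))
      (Measurable.indicator (measurable_gaussianPDF_param' m σ c (Real.toNNReal (σ ^ 2))) hS)
  have hS1 : MeasurableSet {q : (ℝ × ℝ) × ℝ | q.1.2 * q.2 ≤ q.1.2 * q.1.1} :=
    measurableSet_le (by fun_prop) (by fun_prop)
  have hS2 : MeasurableSet ({q : (ℝ × ℝ) × ℝ | q.2 ∈ t} ∩ {q | q.1.2 * q.2 ≤ q.1.2 * q.1.1}) :=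
    (ht.preimage measurable_snd).inter hS1
  have hrw : (fun p : ℝ × ℝ => fissionKernelFun m σ c p t)
      = fun p : ℝ × ℝ =>
        (∫⁻ y in Prod.mk p ⁻¹' {q : (ℝ × ℝ) × ℝ | q.1.2 * q.2 ≤ q.1.2 * q.1.1},
            gaussianPDF (m + p.2 * σ ^ 2 / c) (Real.toNNReal (σ ^ 2)) y ∂volume)⁻¹
          * ∫⁻ y in Prod.mk p ⁻¹' ({q : (ℝ × ℝ) × ℝ | q.2 ∈ t} ∩ {q | q.1.2 * q.2 ≤ q.1.2 * q.1.1}),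
              gaussianPDF (m + p.2 * σ ^ 2 / c) (Real.toNNReal (σ ^ 2)) y ∂volume := by
    funext p
    have e1 : Prod.mk p ⁻¹' {q : (ℝ × ℝ) × ℝ | q.1.2 * q.2 ≤ q.1.2 * q.1.1}
        = {y | p.2 * y ≤ p.2 * p.1} := rfl
    have e2 : Prod.mk p ⁻¹' ({q : (ℝ × ℝ) × ℝ | q.2 ∈ t} ∩ {q | q.1.2 * q.2 ≤ q.1.2 * q.1.1})
        = t ∩ {y | p.2 * y ≤ p.2 * p.1} := rfl
    rw [e1, e2, fissionKernelFun]
    simp only [truncate, Measure.smul_apply, smul_eq_mul, Measure.restrict_apply ht]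
    rw [gaussianReal_apply _ hv, gaussianReal_apply _ hv]
  rw [hrw]
  exact ((key _ hS1).inv).mul (key _ hS2)



lemma fissionKernel_markov (m σ c : ℝ) (hv : Real.toNNReal (σ ^ 2) ≠ 0) (p : ℝ × ℝ) :
    fissionKernelFun m σ c p Set.univ = 1 := by
  rw [fissionKernelFun]
  simp only [truncate, Measure.smul_apply, smul_eq_mul,
    Measure.restrict_apply MeasurableSet.univ, Set.univ_inter]
  exact ENNReal.inv_mul_cancel (gaussian_halfline_pos _ hv _ _) (measure_ne_top _ _)

set_option maxHeartbeats 1000000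

/-- one-dimensional data fission with Laplace noise. If `Y ~ N(m, σ²)`,
`ζ ~ Laplace(c)` independent of `Y`, and `δ = sign(ζ)`, then conditional on `(Y + ζ, δ)`,
`Y` follows `N(m + δσ²/c, σ²)` truncated to the half-line `A = {y : δ y ≤ δ (Y + ζ)}`. -/
theorem data_fission_laplace_onedim
    {Ω : Type*} [MeasurableSpace Ω] (P : Measure Ω) [IsProbabilityMeasure P]
    (m σ c : ℝ) (hσ : 0 < σ) (hc : 0 < c)
    (Y ζ : Ω → ℝ) (hY : Measurable Y) (hζ : Measurable ζ)
    (hYlaw : P.map Y = gaussianReal m (Real.toNNReal (σ ^ 2)))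
    (hζlaw : P.map ζ = laplaceMeasure c)
    (hindep : IndepFun Y ζ P) :
    ∀ᵐ p ∂(P.map fun ω => (Y ω + ζ ω, Real.sign (ζ ω))),
      condDistrib Y (fun ω => (Y ω + ζ ω, Real.sign (ζ ω))) P p =
        truncate (gaussianReal (m + p.2 * σ ^ 2 / c) (Real.toNNReal (σ ^ 2)))
          {y | p.2 * y ≤ p.2 * p.1} := by
  have hv : Real.toNNReal (σ ^ 2) ≠ 0 := by
    rw [Ne, Real.toNNReal_eq_zero, not_le]; positivity
  have hglmeas : Measurable fun z : ℝ => ENNReal.ofReal ((1 / (2 * c)) * Real.exp (-|z| / c)) := by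
    refine Measurable.ennreal_ofReal (Measurable.const_mul ?_ _)
    exact Real.measurable_exp.comp (by fun_prop)
  set κ : Kernel (ℝ × ℝ) ℝ := ⟨fissionKernelFun m σ c, measurable_fissionKernelFun m σ c hv⟩
    with hκ_def
  have hκapp : ∀ p, κ p = fissionKernelFun m σ c p := fun p => rfl
  haveI hMarkov : IsMarkovKernel κ := by
    refine ⟨fun p => ⟨?_⟩⟩
    rw [hκapp]
    exact fissionKernel_markov m σ c hv p
  haveI hPMζ : IsProbabilityMeasure (laplaceMeasure c) :=
    hζlaw ▸ Measure.isProbabilityMeasure_map hζ.aemeasurable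
  have hφ : Measurable fun q : ℝ × ℝ => (q.1 + q.2, Real.sign q.2) :=
    (measurable_fst.add measurable_snd).prodMk (measurable_realSign.comp measurable_snd)
  have hΦ : Measurable fun q : ℝ × ℝ => ((q.1 + q.2, Real.sign q.2), q.1) :=
    hφ.prodMk measurable_fst
  have hX : Measurable fun ω => (Y ω + ζ ω, Real.sign (ζ ω)) :=
    (hY.add hζ).prodMk (measurable_realSign.comp hζ)
  have hYZ : P.map (fun ω => (Y ω, ζ ω))
      = (gaussianReal m (Real.toNNReal (σ ^ 2))).prod (laplaceMeasure c) := by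
    rw [← hYlaw, ← hζlaw]
    exact (indepFun_iff_map_prod_eq_prod_map_map hY.aemeasurable hζ.aemeasurable).mp hindep
  have hmapX : (P.map fun ω => (Y ω + ζ ω, Real.sign (ζ ω)))
      = ((gaussianReal m (Real.toNNReal (σ ^ 2))).prod (laplaceMeasure c)).map
          (fun q : ℝ × ℝ => (q.1 + q.2, Real.sign q.2)) := by
    rw [← hYZ, Measure.map_map hφ (hY.prodMk hζ)]
    rfl
  have hmapXY : (P.map fun ω => ((Y ω + ζ ω, Real.sign (ζ ω)), Y ω))
      = ((gaussianReal m (Real.toNNReal (σ ^ 2))).prod (laplaceMeasure c)).map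
          (fun q : ℝ × ℝ => ((q.1 + q.2, Real.sign q.2), q.1)) := by
    rw [← hYZ, Measure.map_map hΦ (hY.prodMk hζ)]
    rfl
  haveI : IsProbabilityMeasure (((gaussianReal m (Real.toNNReal (σ ^ 2))).prod
      (laplaceMeasure c)).map (fun q : ℝ × ℝ => (q.1 + q.2, Real.sign q.2))) :=
    Measure.isProbabilityMeasure_map hφ.aemeasurable
  have prod_eq : ∀ F : ℝ × ℝ → ℝ≥0∞, Measurable F →
      ∫⁻ q, F q ∂((gaussianReal m (Real.toNNReal (σ ^ 2))).prod (laplaceMeasure c))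
        = ∫⁻ y, gaussianPDF m (Real.toNNReal (σ ^ 2)) y *
            ∫⁻ z, ENNReal.ofReal ((1 / (2 * c)) * Real.exp (-|z| / c)) * F (y, z) ∂volume ∂volume := by
    intro F hF
    rw [lintegral_prod F hF.aemeasurable]
    have hinner : ∀ y : ℝ, ∫⁻ z, F (y, z) ∂(laplaceMeasure c)
        = ∫⁻ z, ENNReal.ofReal ((1 / (2 * c)) * Real.exp (-|z| / c)) * F (y, z) ∂volume := by
      intro y
      rw [laplaceMeasure, lintegral_withDensity_eq_lintegral_mul volume hglmeas
        (g := fun z => F (y, z)) (hF.comp measurable_prodMk_left)]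
      rfl
    simp_rw [hinner]
    rw [gaussianReal_of_var_ne_zero m hv,
      lintegral_withDensity_eq_lintegral_mul volume (measurable_gaussianPDF m _)
        (Measurable.lintegral_prod_right' (ν := volume)
          (f := fun p : ℝ × ℝ => ENNReal.ofReal ((1 / (2 * c)) * Real.exp (-|p.2| / c)) * F p)
          ((hglmeas.comp measurable_snd).mul hF))]
    rfl
  have hκeq : (P.map fun ω => ((Y ω + ζ ω, Real.sign (ζ ω)), Y ω))
      = (P.map fun ω => (Y ω + ζ ω, Real.sign (ζ ω))) ⊗ₘ κ := by
    rw [hmapXY, hmapX]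
    ext E hE
    rw [Measure.map_apply hΦ hE, Measure.compProd_apply hE,
      lintegral_map (Kernel.measurable_kernel_prodMk_left hE) hφ]
    set k : ℝ × ℝ → ℝ≥0∞ := fun p => κ p (Prod.mk p ⁻¹' E) with hk_def
    have hk : Measurable k := Kernel.measurable_kernel_prodMk_left hE
    have hpt : ∀ δ : ℝ, (δ = 1 ∨ δ = -1) → ∀ s : ℝ,
        ∫⁻ y in {y | δ * y < δ * s},
            gaussianPDF (m + δ * σ ^ 2 / c) (Real.toNNReal (σ ^ 2)) y
              * Set.indicator E 1 ((s, δ), y) ∂volume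
          = ∫⁻ y in {y | δ * y < δ * s},
              gaussianPDF (m + δ * σ ^ 2 / c) (Real.toNNReal (σ ^ 2)) y * k (s, δ) ∂volume := by
      intro δ hδ s
      have hδ0 : δ ≠ 0 := by rcases hδ with h | h <;> rw [h] <;> norm_num
      have hsect : MeasurableSet (Prod.mk ((s, δ) : ℝ × ℝ) ⁻¹' E) :=
        hE.preimage measurable_prodMk_left
      have hAe : volume.restrict {y : ℝ | δ * y < δ * s}
          = volume.restrict {y : ℝ | δ * y ≤ δ * s} := by
        refine Measure.restrict_congr_set (Filter.eventuallyEq_set.mpr ?_)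
        have hne : ∀ᵐ y : ℝ ∂volume, y ≠ s := by
          rw [ae_iff]
          have h0 : {y : ℝ | ¬y ≠ s} = {s} := by ext y; simp
          rw [h0]
          exact Real.volume_singleton
        filter_upwards [hne] with y hy
        show δ * y < δ * s ↔ δ * y ≤ δ * s
        constructor
        · exact le_of_lt
        · intro h
          exact h.lt_of_ne fun hcc => hy (mul_left_cancel₀ hδ0 hcc)
      rw [hAe]
      have hind : ∀ y : ℝ,
          gaussianPDF (m + δ * σ ^ 2 / c) (Real.toNNReal (σ ^ 2)) y
              * Set.indicator E 1 ((s, δ), y)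
          = Set.indicator (Prod.mk ((s, δ) : ℝ × ℝ) ⁻¹' E)
              (gaussianPDF (m + δ * σ ^ 2 / c) (Real.toNNReal (σ ^ 2))) y := by
        intro y
        by_cases h : ((s, δ), y) ∈ E
        · rw [Set.indicator_of_mem h, Set.indicator_of_mem
            (s := Prod.mk ((s, δ) : ℝ × ℝ) ⁻¹' E) (a := y) h, Pi.one_apply, mul_one]
        · rw [Set.indicator_of_notMem h, Set.indicator_of_notMem
            (s := Prod.mk ((s, δ) : ℝ × ℝ) ⁻¹' E) (a := y) h, mul_zero]
      have hAmeas : MeasurableSet {y : ℝ | δ * y ≤ δ * s} :=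
        measurableSet_le (measurable_id.const_mul δ) measurable_const
      rw [setLIntegral_congr_fun hAmeas (fun y _ => hind y)]
      rw [lintegral_indicator hsect, Measure.restrict_restrict hsect,
        lintegral_mul_const' _ _ (measure_ne_top (κ (s, δ)) _)]
      have hkval : κ (s, δ) (Prod.mk ((s, δ) : ℝ × ℝ) ⁻¹' E)
          = (gaussianReal (m + δ * σ ^ 2 / c) (Real.toNNReal (σ ^ 2)) {y | δ * y ≤ δ * s})⁻¹
            * gaussianReal (m + δ * σ ^ 2 / c) (Real.toNNReal (σ ^ 2))
                ((Prod.mk ((s, δ) : ℝ × ℝ) ⁻¹' E) ∩ {y | δ * y ≤ δ * s}) := by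
        show fissionKernelFun m σ c (s, δ) (Prod.mk ((s, δ) : ℝ × ℝ) ⁻¹' E) = _
        rw [fissionKernelFun]
        simp only [truncate, Measure.smul_apply, smul_eq_mul, Measure.restrict_apply hsect]
      rw [hkval, ← gaussianReal_apply _ hv, ← gaussianReal_apply _ hv, mul_comm, ← mul_assoc,
        ENNReal.mul_inv_cancel (gaussian_halfline_pos _ hv δ s) (measure_ne_top _ _), one_mul]
    have hindL : ∀ (y z : ℝ),
        Set.indicator ((fun q : ℝ × ℝ => ((q.1 + q.2, Real.sign q.2), q.1)) ⁻¹' E)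
          (1 : ℝ × ℝ → ℝ≥0∞) (y, z)
        = Set.indicator E 1 ((y + z, Real.sign z), y) := by
      intro y z
      by_cases h : ((y + z, Real.sign z), y) ∈ E
      · rw [Set.indicator_of_mem (s := (fun q : ℝ × ℝ => ((q.1 + q.2, Real.sign q.2), q.1)) ⁻¹' E)
          (a := ((y, z) : ℝ × ℝ)) h, Set.indicator_of_mem h]
        rfl
      · rw [Set.indicator_of_notMem
          (s := (fun q : ℝ × ℝ => ((q.1 + q.2, Real.sign q.2), q.1)) ⁻¹' E)
          (a := ((y, z) : ℝ × ℝ)) h, Set.indicator_of_notMem h]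
    calc ((gaussianReal m (Real.toNNReal (σ ^ 2))).prod (laplaceMeasure c))
          ((fun q : ℝ × ℝ => ((q.1 + q.2, Real.sign q.2), q.1)) ⁻¹' E)
        = ∫⁻ q, Set.indicator ((fun q : ℝ × ℝ => ((q.1 + q.2, Real.sign q.2), q.1)) ⁻¹' E)
            (1 : ℝ × ℝ → ℝ≥0∞) q
            ∂((gaussianReal m (Real.toNNReal (σ ^ 2))).prod (laplaceMeasure c)) :=
          (lintegral_indicator_one (hΦ hE)).symm
      _ = ∫⁻ y, gaussianPDF m (Real.toNNReal (σ ^ 2)) y *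
            ∫⁻ z, ENNReal.ofReal ((1 / (2 * c)) * Real.exp (-|z| / c))
              * Set.indicator E 1 ((y + z, Real.sign z), y) ∂volume ∂volume := by
          rw [prod_eq _ (measurable_one.indicator (hΦ hE))]
          simp_rw [hindL]
      _ = ∫⁻ y, gaussianPDF m (Real.toNNReal (σ ^ 2)) y *
            ∫⁻ z, ENNReal.ofReal ((1 / (2 * c)) * Real.exp (-|z| / c))
              * k (y + z, Real.sign z) ∂volume ∂volume :=
          both_sides m σ c hσ hc k hk E hE hpt
      _ = ∫⁻ q, k (q.1 + q.2, Real.sign q.2)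
            ∂((gaussianReal m (Real.toNNReal (σ ^ 2))).prod (laplaceMeasure c)) :=
          (prod_eq _ (hk.comp hφ)).symm
      _ = ∫⁻ q, κ (q.1 + q.2, Real.sign q.2)
            (Prod.mk ((q.1 + q.2, Real.sign q.2) : ℝ × ℝ) ⁻¹' E)
            ∂((gaussianReal m (Real.toNNReal (σ ^ 2))).prod (laplaceMeasure c)) := rfl
  have hfinal := condDistrib_ae_eq_of_measure_eq_compProd_of_measurable hX hY hκeq
  filter_upwards [hfinal] with p hp
  exact hp
end

section
/- Let Y ~ N_n(μ, σ²I_n) and ζ ∈ ℝⁿ with ζ_i i.i.d. N(0, σ²), independent of Y, and c > 0. Then the randomized selection S(Y) := argmax_i (Y_i + cζ_i) is independent of the vector Y − (1/c)ζ, and consequently E[(Y − (1/c)ζ)_{S(Y)} − μ_{S(Y)}] = 0. -/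
open MeasureTheory ProbabilityTheory Real
open scoped NNReal ENNReal

namespace ThinKey


lemma pdf_mul (m₁ m₂ x₁ x₂ : ℝ) (w₁ w₂ : ℝ≥0) :
    gaussianPDFReal m₁ w₁ x₁ * gaussianPDFReal m₂ w₂ x₂
      = ((Real.sqrt (2*π*w₁))⁻¹ * (Real.sqrt (2*π*w₂))⁻¹)
          * Real.exp (-(x₁-m₁)^2/(2*w₁) + -(x₂-m₂)^2/(2*w₂)) := by
  rw [gaussianPDFReal, gaussianPDFReal, Real.exp_add]
  ring

lemma pdf_key {c : ℝ} (hc : 0 < c) {v v₁ v' : ℝ≥0} (hv : 0 < (v:ℝ))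
    (h₁ : (v₁:ℝ) = (v:ℝ)*(1+c^2)) (h' : (v':ℝ) = (v:ℝ)/(1+c^2)) (m u y : ℝ) :
    gaussianPDFReal m v (u - c*y) * gaussianPDFReal 0 v y
      = gaussianPDFReal m v₁ u * gaussianPDFReal (c*(u-m)/(1+c^2)) v' y := by
  have h1c : (0:ℝ) < 1 + c^2 := by positivity
  rw [pdf_mul, pdf_mul]
  have hconst : ∀ a b : ℝ, 0 ≤ a → (Real.sqrt a)⁻¹ * (Real.sqrt b)⁻¹ = (Real.sqrt (a*b))⁻¹ := by
    intro a b ha; rw [← mul_inv, ← Real.sqrt_mul ha]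
  rw [hconst _ _ (by positivity), hconst _ _ (by positivity)]
  have hvv : (2*π*(v:ℝ)) * (2*π*(v:ℝ)) = (2*π*(v₁:ℝ)) * (2*π*(v':ℝ)) := by
    rw [h₁, h']; field_simp
  rw [hvv]
  congr 1
  rw [Real.exp_eq_exp, h₁, h']
  field_simp
  ring

lemma lintegral_translate (f : ℝ → ℝ≥0∞) (a : ℝ) : ∫⁻ x, f x = ∫⁻ x, f (x - a) := by
  simpa [← sub_eq_add_neg] using (lintegral_add_right_eq_self f (-a)).symm

lemma map_affine (a k m : ℝ) (w : ℝ≥0) :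
    (gaussianReal m w).map (fun y => a - k*y)
      = gaussianReal (a - k*m) (Real.toNNReal (k^2) * w) := by
  have hcomp : (fun y : ℝ => a - k*y) = (fun x => x + a) ∘ (fun y => (-k)*y) := by
    funext y; simp [Function.comp]; ring
  have hv : (NNReal.mk ((-k)^2) (sq_nonneg _) : ℝ≥0) = Real.toNNReal (k^2) := by
    ext; simp [Real.coe_toNNReal _ (sq_nonneg k)]
  have hm : (-k)*m + a = a - k*m := by ring
  rw [hcomp, ← Measure.map_map (measurable_id'.add_const a) (measurable_const_mul _),
    gaussianReal_map_const_mul (-k), gaussianReal_map_add_const a, hv, hm]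

lemma prod_withDensity_apply {F G : ℝ → ℝ≥0∞} (hF : Measurable F) (hG : Measurable G)
    (hFt : ∀ x, F x ≠ ⊤)
    {S : Set (ℝ×ℝ)} (hS : MeasurableSet S) :
    ((volume.withDensity F).prod (volume.withDensity G)) S
      = ∫⁻ x, ∫⁻ y, S.indicator 1 (x,y) * F x * G y := by
  have hind : Measurable (S.indicator (1 : ℝ×ℝ → ℝ≥0∞)) := measurable_one.indicator hS
  rw [← lintegral_indicator_one hS, lintegral_prod _ hind.aemeasurable]
  have hinner : ∀ x, (∫⁻ y, S.indicator 1 (x,y) ∂(volume.withDensity G))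
      = ∫⁻ y, S.indicator 1 (x,y) * G y := by
    intro x
    rw [lintegral_withDensity_eq_lintegral_mul volume hG
      ((by exact hind.comp measurable_prodMk_left) : Measurable fun y => S.indicator 1 (x,y) )]
    exact lintegral_congr fun y => mul_comm _ _
  simp only [hinner]
  rw [lintegral_withDensity_eq_lintegral_mul volume hF
    (Measurable.lintegral_prod_right ((by exact hind.mul (hG.comp measurable_snd)) :
      Measurable (Function.uncurry fun x y => S.indicator 1 (x,y) * G y)))]
  refine lintegral_congr fun x => ?_
  simp only [Pi.mul_apply]
  rw [← lintegral_const_mul' _ _ (hFt x)]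
  refine lintegral_congr fun y => ?_
  ring

lemma map_T (m : ℝ) {c : ℝ} (hc : 0 < c) {v v₁ v₂ : ℝ≥0} (hv0 : 0 < (v:ℝ))
    (h₁ : (v₁:ℝ) = (v:ℝ)*(1+c^2)) (h₂ : (v₂:ℝ) = (v:ℝ)*(1+c^2)/c^2) :
    ((gaussianReal m v).prod (gaussianReal 0 v)).map
        (fun p : ℝ × ℝ => (p.1 + c*p.2, p.1 - (1/c)*p.2))
      = (gaussianReal m v₁).prod (gaussianReal m v₂) := by
  classical
  have h1c : (0:ℝ) < 1+c^2 := by positivity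
  have hcne : c ≠ 0 := ne_of_gt hc
  set k : ℝ := c + 1/c with hk
  set v' : ℝ≥0 := Real.toNNReal ((v:ℝ)/(1+c^2)) with hv'def
  have hv' : (v':ℝ) = (v:ℝ)/(1+c^2) := Real.coe_toNNReal _ (by positivity)
  have hvne : v ≠ 0 := by
    intro h; rw [h] at hv0; simp at hv0
  have hv₁pos : (0:ℝ) < (v₁:ℝ) := by rw [h₁]; positivity
  have hv₁ne : v₁ ≠ 0 := by intro h; rw [h] at hv₁pos; simp at hv₁pos
  have hv'pos : (0:ℝ) < (v':ℝ) := by rw [hv']; positivity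
  have hv'ne : v' ≠ 0 := by intro h; rw [h] at hv'pos; simp at hv'pos
  have hT : Measurable (fun p : ℝ × ℝ => (p.1 + c*p.2, p.1 - (1/c)*p.2)) :=
    (measurable_fst.add (measurable_snd.const_mul c)).prodMk
      (measurable_fst.sub (measurable_snd.const_mul (1/c)))
  refine (Measure.prod_eq fun A B hA hB => ?_).symm
  have hSmeas : MeasurableSet ((fun p : ℝ × ℝ => (p.1 + c*p.2, p.1 - (1/c)*p.2)) ⁻¹' (A ×ˢ B)) :=
    hT (hA.prod hB)
  rw [Measure.map_apply hT (hA.prod hB),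
    gaussianReal_of_var_ne_zero m hvne, gaussianReal_of_var_ne_zero 0 hvne,
    prod_withDensity_apply (measurable_gaussianPDF m v) (measurable_gaussianPDF 0 v)
      (fun x => ENNReal.ofReal_ne_top) hSmeas]
  have hindS : ∀ x y : ℝ,
      ((fun p : ℝ×ℝ => (p.1 + c*p.2, p.1 - (1/c)*p.2)) ⁻¹' (A ×ˢ B)).indicator
          (1 : ℝ×ℝ → ℝ≥0∞) (x,y)
        = A.indicator 1 (x + c*y) * B.indicator 1 (x - (1/c)*y) := by
    intro x y
    rw [Set.indicator_apply, Set.indicator_apply, Set.indicator_apply]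
    simp only [Set.mem_preimage, Set.prodMk_mem_set_prod_eq]
    by_cases h1 : x + c*y ∈ A <;> by_cases h2 : x - (1/c)*y ∈ B <;> simp [h1, h2]
  -- measurability helpers
  have mA2 : Measurable (fun p : ℝ×ℝ => A.indicator (1:ℝ→ℝ≥0∞) (p.1 + c*p.2)) :=
    (measurable_one.indicator hA).comp (measurable_fst.add (measurable_snd.const_mul c))
  have mB2 : Measurable (fun p : ℝ×ℝ => B.indicator (1:ℝ→ℝ≥0∞) (p.1 - (1/c)*p.2)) :=
    (measurable_one.indicator hB).comp (measurable_fst.sub (measurable_snd.const_mul (1/c)))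
  have mBk : Measurable (fun p : ℝ×ℝ => B.indicator (1:ℝ→ℝ≥0∞) (p.1 - k*p.2)) :=
    (measurable_one.indicator hB).comp (measurable_fst.sub (measurable_snd.const_mul k))
  have mH : Measurable (fun p : ℝ×ℝ => gaussianPDF (c*(p.1-m)/(1+c^2)) v' p.2) := by
    unfold gaussianPDF gaussianPDFReal
    exact ENNReal.measurable_ofReal.comp (by fun_prop)
  have hindAne : ∀ x, A.indicator (1:ℝ→ℝ≥0∞) x ≠ ⊤ := by
    intro x; by_cases h : x ∈ A <;> simp [Set.indicator_apply, h]
  calc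
    ∫⁻ x, ∫⁻ y, ((fun p : ℝ×ℝ => (p.1 + c*p.2, p.1 - (1/c)*p.2)) ⁻¹' (A ×ˢ B)).indicator
          1 (x,y) * gaussianPDF m v x * gaussianPDF 0 v y
      = ∫⁻ x, ∫⁻ y, (A.indicator 1 (x + c*y) * B.indicator 1 (x - (1/c)*y))
          * gaussianPDF m v x * gaussianPDF 0 v y := by
        refine lintegral_congr fun x => lintegral_congr fun y => by rw [hindS]
    _ = ∫⁻ y, ∫⁻ x, (A.indicator 1 (x + c*y) * B.indicator 1 (x - (1/c)*y))
          * gaussianPDF m v x * gaussianPDF 0 v y := by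
        refine lintegral_lintegral_swap ?_
        exact (((mA2.mul mB2).mul ((measurable_gaussianPDF m v).comp measurable_fst)).mul
          ((measurable_gaussianPDF 0 v).comp measurable_snd)).aemeasurable
    _ = ∫⁻ y, ∫⁻ x, (A.indicator 1 ((x - c*y) + c*y) * B.indicator 1 ((x - c*y) - (1/c)*y))
          * gaussianPDF m v (x - c*y) * gaussianPDF 0 v y := by
        refine lintegral_congr fun y => ?_
        exact lintegral_translate
          (fun x => (A.indicator 1 (x + c*y) * B.indicator 1 (x - (1/c)*y))
            * gaussianPDF m v x * gaussianPDF 0 v y) (c*y)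
    _ = ∫⁻ y, ∫⁻ x, (A.indicator 1 x * gaussianPDF m v₁ x)
          * (gaussianPDF (c*(x-m)/(1+c^2)) v' y * B.indicator 1 (x - k*y)) := by
        refine lintegral_congr fun y => lintegral_congr fun x => ?_
        have e1 : x - c*y + c*y = x := by ring
        have e2 : x - c*y - (1/c)*y = x - k*y := by rw [hk]; ring
        rw [e1, e2]
        have hdens : gaussianPDF m v (x - c*y) * gaussianPDF 0 v y
            = gaussianPDF m v₁ x * gaussianPDF (c*(x-m)/(1+c^2)) v' y := by
          show ENNReal.ofReal _ * ENNReal.ofReal _ = ENNReal.ofReal _ * ENNReal.ofReal _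
          rw [← ENNReal.ofReal_mul (gaussianPDFReal_nonneg _ _ _),
            pdf_key hc hv0 h₁ hv' m x y,
            ENNReal.ofReal_mul (gaussianPDFReal_nonneg _ _ _)]
        calc (A.indicator 1 x * B.indicator 1 (x - k*y)) * gaussianPDF m v (x - c*y)
              * gaussianPDF 0 v y
            = (A.indicator 1 x * B.indicator 1 (x - k*y))
              * (gaussianPDF m v (x - c*y) * gaussianPDF 0 v y) := by ring
          _ = (A.indicator 1 x * B.indicator 1 (x - k*y))
              * (gaussianPDF m v₁ x * gaussianPDF (c*(x-m)/(1+c^2)) v' y) := by rw [hdens]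
          _ = (A.indicator 1 x * gaussianPDF m v₁ x)
              * (gaussianPDF (c*(x-m)/(1+c^2)) v' y * B.indicator 1 (x - k*y)) := by ring
    _ = ∫⁻ x, ∫⁻ y, (A.indicator 1 x * gaussianPDF m v₁ x)
          * (gaussianPDF (c*(x-m)/(1+c^2)) v' y * B.indicator 1 (x - k*y)) := by
        refine (lintegral_lintegral_swap ?_).symm
        exact (((measurable_one.indicator hA).comp measurable_fst |>.mul
          ((measurable_gaussianPDF m v₁).comp measurable_fst)).mul
          (mH.mul mBk)).aemeasurable
    _ = ∫⁻ x, (A.indicator 1 x * gaussianPDF m v₁ x) * (gaussianReal m v₂ B) := by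
        refine lintegral_congr fun x => ?_
        rw [lintegral_const_mul' _ _
          (ENNReal.mul_ne_top (hindAne x)
            (by rw [gaussianPDF_def]; exact ENNReal.ofReal_ne_top))]
        congr 1
        have hmk : Measurable (fun y : ℝ => x - k*y) :=
          measurable_const.sub (measurable_id.const_mul k)
        have hpre : MeasurableSet ((fun y : ℝ => x - k*y) ⁻¹' B) := hmk hB
        have hBind : ∀ y : ℝ, B.indicator (1:ℝ→ℝ≥0∞) (x - k*y)
            = ((fun y : ℝ => x - k*y) ⁻¹' B).indicator 1 y := by
          intro y; by_cases h : x - k*y ∈ B <;> simp [Set.indicator_apply, Set.mem_preimage, h]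
        calc ∫⁻ y, gaussianPDF (c*(x-m)/(1+c^2)) v' y * B.indicator 1 (x - k*y)
            = ∫⁻ y, ((fun y : ℝ => x - k*y) ⁻¹' B).indicator 1 y
                ∂(volume.withDensity (gaussianPDF (c*(x-m)/(1+c^2)) v')) := by
              rw [lintegral_withDensity_eq_lintegral_mul volume (measurable_gaussianPDF _ _)
                (measurable_one.indicator hpre)]
              exact lintegral_congr fun y => by rw [Pi.mul_apply, hBind]
          _ = (gaussianReal (c*(x-m)/(1+c^2)) v') ((fun y : ℝ => x - k*y) ⁻¹' B) := by
              rw [← gaussianReal_of_var_ne_zero _ hv'ne, lintegral_indicator_one hpre]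
          _ = ((gaussianReal (c*(x-m)/(1+c^2)) v').map (fun y : ℝ => x - k*y)) B :=
              (Measure.map_apply hmk hB).symm
          _ = gaussianReal m v₂ B := by
              rw [map_affine]
              have hmean : x - k*(c*(x-m)/(1+c^2)) = m := by
                rw [hk]; field_simp; ring
              have hvar : Real.toNNReal (k^2) * v' = v₂ := by
                ext
                rw [NNReal.coe_mul, hv', h₂, Real.coe_toNNReal _ (sq_nonneg k)]
                rw [hk]; field_simp; ring
              rw [hmean, hvar]
    _ = gaussianReal m v₁ A * gaussianReal m v₂ B := by
        rw [lintegral_mul_const' _ _ (measure_ne_top _ _)]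
        congr 1
        have hGA : gaussianReal m v₁ A
            = ∫⁻ x, A.indicator 1 x ∂(volume.withDensity (gaussianPDF m v₁)) := by
          rw [lintegral_indicator_one hA, ← gaussianReal_of_var_ne_zero m hv₁ne]
        rw [hGA, lintegral_withDensity_eq_lintegral_mul volume (measurable_gaussianPDF m v₁)
          (measurable_one.indicator hA)]
        exact lintegral_congr fun x => (mul_comm _ _)




lemma map_Phi (n : ℕ) (μv : Fin n → ℝ) {c : ℝ} (hc : 0 < c) {v v₁ v₂ : ℝ≥0}
    (hv0 : 0 < (v:ℝ)) (h₁ : (v₁:ℝ) = (v:ℝ)*(1+c^2)) (h₂ : (v₂:ℝ) = (v:ℝ)*(1+c^2)/c^2) :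
    ((Measure.pi fun i => gaussianReal (μv i) v).prod
        (Measure.pi fun _ => gaussianReal 0 v)).map
      (fun q : (Fin n → ℝ) × (Fin n → ℝ) =>
        ((fun i => q.1 i + c * q.2 i), (fun i => q.1 i - (1/c) * q.2 i)))
    = (Measure.pi fun i => gaussianReal (μv i) v₁).prod
        (Measure.pi fun i => gaussianReal (μv i) v₂) := by
  have hT : Measurable (fun p : ℝ × ℝ => (p.1 + c*p.2, p.1 - (1/c)*p.2)) :=
    (measurable_fst.add (measurable_snd.const_mul c)).prodMk
      (measurable_fst.sub (measurable_snd.const_mul (1/c)))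
  have hΦ : Measurable (fun q : (Fin n → ℝ) × (Fin n → ℝ) =>
      ((fun i => q.1 i + c * q.2 i), (fun i => q.1 i - (1/c) * q.2 i))) := by
    refine Measurable.prodMk ?_ ?_ <;> refine measurable_pi_iff.mpr fun i => ?_
    · fun_prop
    · fun_prop
  have hTpi : Measurable (fun w : Fin n → ℝ × ℝ =>
      fun i => (fun p : ℝ × ℝ => (p.1 + c*p.2, p.1 - (1/c)*p.2)) (w i)) :=
    measurable_pi_iff.mpr fun i => hT.comp (measurable_pi_apply i)
  have h1 := (measurePreserving_arrowProdEquivProdArrow ℝ ℝ (Fin n)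
    (fun i => gaussianReal (μv i) v) (fun _ => gaussianReal 0 v)).map_eq
  rw [← h1, Measure.map_map hΦ (MeasurableEquiv.arrowProdEquivProdArrow ℝ ℝ (Fin n)).measurable]
  have hcomp : ((fun q : (Fin n → ℝ) × (Fin n → ℝ) =>
      ((fun i => q.1 i + c * q.2 i), (fun i => q.1 i - (1/c) * q.2 i)))
        ∘ (MeasurableEquiv.arrowProdEquivProdArrow ℝ ℝ (Fin n)))
      = (MeasurableEquiv.arrowProdEquivProdArrow ℝ ℝ (Fin n))
        ∘ (fun w : Fin n → ℝ × ℝ =>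
            fun i => (fun p : ℝ × ℝ => (p.1 + c*p.2, p.1 - (1/c)*p.2)) (w i)) := rfl
  rw [hcomp, ← Measure.map_map
    (MeasurableEquiv.arrowProdEquivProdArrow ℝ ℝ (Fin n)).measurable hTpi]
  rw [(measurePreserving_pi _ _
    (fun i => (⟨hT, map_T (μv i) hc hv0 h₁ h₂⟩ :
      MeasurePreserving _ ((gaussianReal (μv i) v).prod (gaussianReal 0 v))
        ((gaussianReal (μv i) v₁).prod (gaussianReal (μv i) v₂))))).map_eq]
  exact (measurePreserving_arrowProdEquivProdArrow ℝ ℝ (Fin n)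
    (fun i => gaussianReal (μv i) v₁) (fun i => gaussianReal (μv i) v₂)).map_eq

lemma integrable_id_gaussian (m : ℝ) {w : ℝ≥0} (hw : w ≠ 0) :
    Integrable (fun x : ℝ => x) (gaussianReal m w) := by
  have hw0 : (0:ℝ) < (w:ℝ) := by positivity
  rw [gaussianReal_of_var_ne_zero m hw]
  refine (integrable_withDensity_iff (measurable_gaussianPDF m w)
    (ae_of_all _ fun x => ?_)).mpr ?_
  · rw [gaussianPDF_def]; exact ENNReal.ofReal_lt_top
  · have hb : (0:ℝ) < (2*(w:ℝ))⁻¹ := by positivity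
    set C := (Real.sqrt (2*π*(w:ℝ)))⁻¹ with hC
    have h1 : Integrable (fun y : ℝ =>
        C * (y * Real.exp (-((2*(w:ℝ))⁻¹) * y^2))
          + (C*m) * Real.exp (-((2*(w:ℝ))⁻¹) * y^2)) volume :=
      ((integrable_mul_exp_neg_mul_sq hb).const_mul C).add
        ((integrable_exp_neg_mul_sq hb).const_mul (C*m))
    refine (h1.comp_sub_right m).congr (ae_of_all _ fun x => ?_)
    show C * ((x-m) * Real.exp (-((2*(w:ℝ))⁻¹) * (x-m)^2))
        + (C*m) * Real.exp (-((2*(w:ℝ))⁻¹) * (x-m)^2)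
      = x * (gaussianPDF m w x).toReal
    rw [gaussianPDF_def, ENNReal.toReal_ofReal (gaussianPDFReal_nonneg _ _ _), gaussianPDFReal]
    have he : Real.exp (-((2*(w:ℝ))⁻¹) * (x-m)^2) = Real.exp (-(x-m)^2/(2*(w:ℝ))) := by
      congr 1; ring
    rw [he]
    ring

lemma integral_id_gaussian (m : ℝ) {w : ℝ≥0} (hw : w ≠ 0) :
    ∫ x, x ∂(gaussianReal m w) = m := by
  have h0 : ∫ x, x ∂(gaussianReal 0 w) = 0 := by
    have hmap : (gaussianReal 0 w).map (fun x => (-1:ℝ)*x) = gaussianReal 0 w := by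
      have h := gaussianReal_map_const_mul (μ := 0) (v := w) (-1)
      rw [mul_zero] at h
      rw [show (fun x => (-1:ℝ)*x) = ((-1:ℝ) * ·) from rfl, h]
      congr 1
      ext
      simp [NNReal.coe_mul]
    have h2 := integral_map (μ := gaussianReal 0 w) (φ := fun x => (-1:ℝ)*x)
      (f := fun x : ℝ => x) (measurable_const_mul (-1)).aemeasurable
      aestronglyMeasurable_id
    rw [hmap] at h2
    simp only [neg_one_mul] at h2
    rw [integral_neg] at h2
    linarith [h2]
  have hrep : gaussianReal m w = (gaussianReal 0 w).map (· + m) := by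
    rw [gaussianReal_map_add_const]; simp
  have h2 := integral_map (μ := gaussianReal 0 w) (φ := fun x : ℝ => x + m)
    (f := fun x : ℝ => x) (measurable_id'.add_const m).aemeasurable
    aestronglyMeasurable_id
  rw [hrep, h2]
  rw [integral_add (integrable_id_gaussian 0 hw) (integrable_const m), h0, integral_const]
  simp

lemma map_eval_pi (n : ℕ) (m : Fin n → ℝ) (w : ℝ≥0) (i : Fin n) :
    (Measure.pi fun j => gaussianReal (m j) w).map (fun x => x i) = gaussianReal (m i) w := by
  ext s hs
  rw [Measure.map_apply (measurable_pi_apply i) hs]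
  have hpre : (fun x : Fin n → ℝ => x i) ⁻¹' s
      = Set.pi Set.univ (Function.update (fun _ => Set.univ) i s) := Set.eval_preimage
  rw [hpre, Measure.pi_pi]
  rw [Finset.prod_eq_single i (fun j _ hj => by simp [Function.update_of_ne hj])
    (fun h => absurd (Finset.mem_univ i) h)]
  simp


end ThinKey

open MeasureTheory ProbabilityTheory

/-- The `N_n(m, v Iₙ)` multivariate normal with independent coordinates. -/
noncomputable def gaussianPi (n : ℕ) (m : Fin n → ℝ) (v : NNReal) : Measure (Fin n → ℝ) :=
  Measure.pi fun i => gaussianReal (m i) v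

/-- the randomized selection `S(Y) = argmax_i (Yᵢ + cζᵢ)` (a function of
`Y + cζ`) is independent of `Y - (1/c)ζ`, and consequently
`E[(Y - (1/c)ζ)_{S(Y)} - μ_{S(Y)}] = 0`. -/
theorem thinning_selection_independence_and_unbiasedness
    {Ω : Type*} [MeasurableSpace Ω] (P : Measure Ω) [IsProbabilityMeasure P]
    (n : ℕ) [NeZero n] (μ : Fin n → ℝ) (σ c : ℝ) (hσ : 0 < σ) (hc : 0 < c)
    (Y ζ : Ω → Fin n → ℝ) (hY : Measurable Y) (hζ : Measurable ζ)
    (hYlaw : P.map Y = gaussianPi n μ (Real.toNNReal (σ ^ 2)))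
    (hζlaw : P.map ζ = gaussianPi n (fun _ => 0) (Real.toNNReal (σ ^ 2)))
    (hindep : IndepFun Y ζ P)
    -- S(Y) is an argmax of Y + cζ, and depends on Y only through Y + cζ
    (g : (Fin n → ℝ) → Fin n) (hg : Measurable g)
    (hgmax : ∀ x : Fin n → ℝ, ∀ i, x i ≤ x (g x))
    (S : Ω → Fin n) (hS : S = fun ω => g fun i => Y ω i + c * ζ ω i) :
    IndepFun S (fun ω i => Y ω i - (1 / c) * ζ ω i) P ∧
      ∫ ω, ((Y ω (S ω) - (1 / c) * ζ ω (S ω)) - μ (S ω)) ∂P = 0 := by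
  classical
  set v : NNReal := Real.toNNReal (σ^2) with hvdef
  set v₁ : NNReal := Real.toNNReal (σ^2*(1+c^2)) with h1def
  set v₂ : NNReal := Real.toNNReal (σ^2*(1+c^2)/c^2) with h2def
  have hv : (v:ℝ) = σ^2 := Real.coe_toNNReal _ (sq_nonneg σ)
  have h₁ : (v₁:ℝ) = (v:ℝ)*(1+c^2) := by
    rw [Real.coe_toNNReal _ (by positivity), hv]
  have h₂ : (v₂:ℝ) = (v:ℝ)*(1+c^2)/c^2 := by
    rw [Real.coe_toNNReal _ (by positivity), hv]
  have hv0 : (0:ℝ) < (v:ℝ) := by rw [hv]; positivity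
  have hv₂pos : (0:ℝ) < (v₂:ℝ) := by rw [h₂]; positivity
  have hv₂ne : v₂ ≠ 0 := by intro h; rw [h] at hv₂pos; simp at hv₂pos
  set U : Ω → Fin n → ℝ := fun ω i => Y ω i + c * ζ ω i with hU
  set V : Ω → Fin n → ℝ := fun ω i => Y ω i - (1/c) * ζ ω i with hV
  have hUm : Measurable U := measurable_pi_iff.mpr fun i =>
    ((measurable_pi_apply i).comp hY).add (((measurable_pi_apply i).comp hζ).const_mul c)
  have hVm : Measurable V := measurable_pi_iff.mpr fun i =>
    ((measurable_pi_apply i).comp hY).sub (((measurable_pi_apply i).comp hζ).const_mul (1/c))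
  have hjoint : P.map (fun ω => (Y ω, ζ ω)) = (P.map Y).prod (P.map ζ) :=
    (indepFun_iff_map_prod_eq_prod_map_map hY.aemeasurable hζ.aemeasurable).mp hindep
  have hΦm : Measurable (fun q : (Fin n → ℝ) × (Fin n → ℝ) =>
      ((fun i => q.1 i + c * q.2 i), (fun i => q.1 i - (1/c) * q.2 i))) := by
    refine Measurable.prodMk ?_ ?_ <;> refine measurable_pi_iff.mpr fun i => ?_
    · fun_prop
    · fun_prop
  haveI hP1 : IsProbabilityMeasure (Measure.pi fun i => gaussianReal (μ i) v₁) := by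
    infer_instance
  haveI hP2 : IsProbabilityMeasure (Measure.pi fun i => gaussianReal (μ i) v₂) := by
    infer_instance
  have hUVlaw : P.map (fun ω => (U ω, V ω))
      = (Measure.pi fun i => gaussianReal (μ i) v₁).prod
          (Measure.pi fun i => gaussianReal (μ i) v₂) := by
    have hcomp : (fun ω => (U ω, V ω))
        = (fun q : (Fin n → ℝ) × (Fin n → ℝ) =>
            ((fun i => q.1 i + c * q.2 i), (fun i => q.1 i - (1/c) * q.2 i)))
          ∘ (fun ω => (Y ω, ζ ω)) := rfl
    rw [hcomp, ← Measure.map_map hΦm (hY.prodMk hζ), hjoint, hYlaw, hζlaw]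
    have hπ1 : gaussianPi n μ v = Measure.pi fun i => gaussianReal (μ i) v := rfl
    have hπ2 : gaussianPi n (fun _ => 0) v = Measure.pi fun _ => gaussianReal 0 v := rfl
    rw [hπ1, hπ2]
    exact ThinKey.map_Phi n μ hc hv0 h₁ h₂
  have hUlaw : P.map U = Measure.pi fun i => gaussianReal (μ i) v₁ := by
    have h := congrArg (fun ρ : Measure ((Fin n → ℝ) × (Fin n → ℝ)) => ρ.map Prod.fst) hUVlaw
    rw [Measure.map_map measurable_fst (hUm.prodMk hVm), Measure.map_fst_prod] at h
    simpa [Function.comp_def] using h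
  have hVlaw : P.map V = Measure.pi fun i => gaussianReal (μ i) v₂ := by
    have h := congrArg (fun ρ : Measure ((Fin n → ℝ) × (Fin n → ℝ)) => ρ.map Prod.snd) hUVlaw
    rw [Measure.map_map measurable_snd (hUm.prodMk hVm), Measure.map_snd_prod] at h
    simpa [Function.comp_def] using h
  have hUV : IndepFun U V P :=
    (indepFun_iff_map_prod_eq_prod_map_map hUm.aemeasurable hVm.aemeasurable).mpr
      (by rw [hUVlaw, hUlaw, hVlaw])
  have hSm : Measurable S := by rw [hS]; exact hg.comp hUm
  have hSV : IndepFun S V P := by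
    have h1 : S = g ∘ U := by rw [hS]; rfl
    have h2 : V = id ∘ V := rfl
    rw [h1, h2]
    exact hUV.comp hg measurable_id
  refine ⟨hSV, ?_⟩
  -- Part 2: the expectation
  have hVilaw : ∀ i, P.map (fun ω => V ω i) = gaussianReal (μ i) v₂ := by
    intro i
    have h1 : (fun ω => V ω i) = (fun x : Fin n → ℝ => x i) ∘ V := rfl
    rw [h1, ← Measure.map_map (measurable_pi_apply i) hVm, hVlaw,
      ThinKey.map_eval_pi n μ v₂ i]
  have hVi_int : ∀ i, Integrable (fun ω => V ω i) P := by
    intro i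
    have h := ThinKey.integrable_id_gaussian (μ i) hv₂ne
    rw [← hVilaw i] at h
    exact (integrable_map_measure h.aestronglyMeasurable
      (((measurable_pi_apply i).comp hVm).aemeasurable)).mp h
  have hVi_mean : ∀ i, ∫ ω, V ω i ∂P = μ i := by
    intro i
    have h2 := integral_map (μ := P) (φ := fun ω => V ω i) (f := fun x : ℝ => x)
      (((measurable_pi_apply i).comp hVm).aemeasurable) aestronglyMeasurable_id
    have h3 : ∫ x, x ∂(P.map (fun ω => V ω i)) = μ i := by
      rw [hVilaw i]; exact ThinKey.integral_id_gaussian (μ i) hv₂ne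
    exact h2.symm.trans h3
  have hSi_meas : ∀ i : Fin n, MeasurableSet (S ⁻¹' {i}) :=
    fun i => hSm (measurableSet_singleton i)
  have hWsum : ∀ ω, V ω (S ω) - μ (S ω)
      = ∑ i : Fin n, (Set.indicator (S ⁻¹' {i}) (fun _ => (1:ℝ)) ω) * (V ω i - μ i) := by
    intro ω
    rw [Finset.sum_eq_single (S ω)]
    · simp [Set.indicator_apply]
    · intro j _ hj
      have : S ω ≠ j := Ne.symm hj
      simp [Set.indicator_apply, Set.mem_preimage, Set.mem_singleton_iff, this]
    · intro h; exact absurd (Finset.mem_univ _) h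
  have hind_int : ∀ i, Integrable
      (fun ω => Set.indicator (S ⁻¹' {i}) (fun _ => (1:ℝ)) ω) P :=
    fun i => (integrable_const (1:ℝ)).indicator (hSi_meas i)
  have hterm_int : ∀ i : Fin n, Integrable
      (fun ω => (Set.indicator (S ⁻¹' {i}) (fun _ => (1:ℝ)) ω) * (V ω i - μ i)) P := by
    intro i
    refine Integrable.bdd_mul ((hVi_int i).sub (integrable_const (μ i)))
      (hind_int i).aestronglyMeasurable (c := 1) (ae_of_all _ fun ω => ?_)
    by_cases h : ω ∈ S ⁻¹' {i} <;> simp [Set.indicator_apply, h]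
  have hterm : ∀ i : Fin n,
      ∫ ω, (Set.indicator (S ⁻¹' {i}) (fun _ => (1:ℝ)) ω) * (V ω i - μ i) ∂P = 0 := by
    intro i
    have hXY : IndepFun (fun ω => Set.indicator (S ⁻¹' {i}) (fun _ => (1:ℝ)) ω)
        (fun ω => V ω i - μ i) P := by
      have e1 : (fun ω => Set.indicator (S ⁻¹' {i}) (fun _ => (1:ℝ)) ω)
          = (fun s : Fin n => Set.indicator {i} (fun _ => (1:ℝ)) s) ∘ S := by
        funext ω; simp [Set.indicator_apply, Set.mem_preimage]
      have e2 : (fun ω => V ω i - μ i) = (fun x : Fin n → ℝ => x i - μ i) ∘ V := rfl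
      rw [e1, e2]
      exact hSV.comp (measurable_of_countable _)
        ((measurable_pi_apply i).sub measurable_const)
    have hint2 : Integrable (fun ω => V ω i - μ i) P :=
      (hVi_int i).sub (integrable_const (μ i))
    have hmul := hXY.integral_fun_mul_eq_mul_integral (hind_int i).aestronglyMeasurable
      hint2.aestronglyMeasurable
    have hmean0 : ∫ ω, (V ω i - μ i) ∂P = 0 := by
      rw [integral_sub (hVi_int i) (integrable_const (μ i)), hVi_mean i, integral_const]
      simp
    calc ∫ ω, (Set.indicator (S ⁻¹' {i}) (fun _ => (1:ℝ)) ω) * (V ω i - μ i) ∂P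
        = (∫ ω, Set.indicator (S ⁻¹' {i}) (fun _ => (1:ℝ)) ω ∂P)
            * ∫ ω, (V ω i - μ i) ∂P := hmul
      _ = 0 := by rw [hmean0, mul_zero]
  show ∫ ω, (V ω (S ω) - μ (S ω)) ∂P = 0
  calc ∫ ω, (V ω (S ω) - μ (S ω)) ∂P
      = ∫ ω, ∑ i : Fin n,
          (Set.indicator (S ⁻¹' {i}) (fun _ => (1:ℝ)) ω) * (V ω i - μ i) ∂P := by
        exact integral_congr_ae (ae_of_all _ hWsum)
    _ = ∑ i : Fin n, ∫ ω,
          (Set.indicator (S ⁻¹' {i}) (fun _ => (1:ℝ)) ω) * (V ω i - μ i) ∂P :=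
        integral_finset_sum _ fun i _ => hterm_int i
    _ = 0 := by simp [hterm]
end

section
/- Let Y ~ N_n(μ, σ²I_n), ζ_i i.i.d. N(0, σ²) independent of Y, c > 0, and S(Y) := argmax_i (Y_i + cζ_i). Then the interval [(Y − (1/c)ζ)_{S(Y)} ± σ√(1 + 1/c²) · z_{1−α/2}] has unconditional selective coverage 1−α for μ_{S(Y)}: P(μ_{S(Y)} ∈ interval) ≥ 1 − α. -/
open MeasureTheory ProbabilityTheory

open Set Real
open scoped ENNReal NNReal

noncomputable def rotL (c : ℝ) : (ℝ × ℝ) →ₗ[ℝ] (ℝ × ℝ) :=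
  Matrix.toLin (Module.Basis.finTwoProd ℝ) (Module.Basis.finTwoProd ℝ) !![1, -(1/c); 1, c]

noncomputable def vW (c : ℝ) (hc : 0 < c) (v : ℝ≥0) : ℝ≥0 :=
  ⟨1 + 1/c^2, by positivity⟩ * v

noncomputable def vV (c : ℝ) (hc : 0 < c) (v : ℝ≥0) : ℝ≥0 :=
  ⟨1 + c^2, by positivity⟩ * v

lemma vW_coe (c : ℝ) (hc : 0 < c) (v : ℝ≥0) : ((vW c hc v : ℝ≥0) : ℝ) = (1 + 1/c^2) * v := rfl
lemma vV_coe (c : ℝ) (hc : 0 < c) (v : ℝ≥0) : ((vV c hc v : ℝ≥0) : ℝ) = (1 + c^2) * v := rfl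

lemma vW_ne (c : ℝ) (hc : 0 < c) {v : ℝ≥0} (hv : v ≠ 0) : vW c hc v ≠ 0 := by
  intro h
  have := congrArg (fun x : ℝ≥0 => (x : ℝ)) h
  simp only [vW_coe, NNReal.coe_zero] at this
  have hvpos : (0:ℝ) < v := lt_of_le_of_ne v.2 (by exact_mod_cast (Ne.symm hv))
  nlinarith [sq_nonneg c, one_div_pos.2 (pow_pos hc 2)]

lemma vV_ne (c : ℝ) (hc : 0 < c) {v : ℝ≥0} (hv : v ≠ 0) : vV c hc v ≠ 0 := by
  intro h
  have := congrArg (fun x : ℝ≥0 => (x : ℝ)) h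
  simp only [vV_coe, NNReal.coe_zero] at this
  have hvpos : (0:ℝ) < v := lt_of_le_of_ne v.2 (by exact_mod_cast (Ne.symm hv))
  nlinarith [sq_nonneg c]

/-- The key pointwise density identity. -/
lemma density_identity (m : ℝ) {v : ℝ≥0} (hv : v ≠ 0) (c : ℝ) (hc : 0 < c) (w u : ℝ) :
    (c + 1/c)⁻¹ * (gaussianPDFReal m v ((c^2 * w + u) / (c^2 + 1))
        * gaussianPDFReal 0 v (c * (u - w) / (c^2 + 1)))
      = gaussianPDFReal m (vW c hc v) w * gaussianPDFReal m (vV c hc v) u := by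
  have hvpos : (0:ℝ) < v := lt_of_le_of_ne v.2 (by exact_mod_cast (Ne.symm hv))
  have hcne : c ≠ 0 := ne_of_gt hc
  have hd : (0:ℝ) < c + 1/c := by positivity
  simp only [gaussianPDFReal, vW_coe, vV_coe]
  have hconst : (√(2 * π * ((1 + 1/c^2) * v)))⁻¹ * (√(2 * π * ((1 + c^2) * v)))⁻¹
      = (c + 1/c)⁻¹ * ((√(2 * π * v))⁻¹ * (√(2 * π * v))⁻¹) := by
    have key : √(2 * π * ((1 + 1/c^2) * v)) * √(2 * π * ((1 + c^2) * v))
        = (c + 1/c) * (√(2 * π * v) * √(2 * π * v)) := by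
      have h1 : √(2 * π * ((1 + 1/c^2) * v) * (2 * π * ((1 + c^2) * v)))
          = √(2 * π * ((1 + 1/c^2) * v)) * √(2 * π * ((1 + c^2) * v)) :=
        Real.sqrt_mul (by positivity) _
      have h2 : √((c + 1/c)^2 * (2 * π * v * (2 * π * v)))
          = (c + 1/c) * √(2 * π * v * (2 * π * v)) := by
        rw [Real.sqrt_mul (sq_nonneg _), Real.sqrt_sq hd.le]
      have h3 : √(2 * π * ↑v * (2 * π * ↑v)) = √(2 * π * ↑v) * √(2 * π * ↑v) :=
        Real.sqrt_mul (by positivity) _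
      have h4 : 2 * π * ((1 + 1/c^2) * v) * (2 * π * ((1 + c^2) * v))
          = (c + 1/c)^2 * (2 * π * ↑v * (2 * π * ↑v)) := by
        field_simp
        ring
      rw [← h1, h4, h2, h3]
    rw [← mul_inv, key, mul_inv, mul_inv]
  have hexp : rexp (-((c^2 * w + u) / (c^2 + 1) - m)^2 / (2*v))
        * rexp (-(c * (u - w) / (c^2 + 1) - 0)^2 / (2*v))
      = rexp (-(w - m)^2 / (2 * ((1 + 1/c^2) * v)))
        * rexp (-(u - m)^2 / (2 * ((1 + c^2) * v))) := by
    rw [← Real.exp_add, ← Real.exp_add]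
    congr 1
    have hc21 : (c:ℝ)^2 + 1 ≠ 0 := by positivity
    field_simp
    ring
  calc (c + 1/c)⁻¹ * ((√(2 * π * v))⁻¹ * rexp (-((c^2 * w + u) / (c^2 + 1) - m)^2 / (2*v))
        * ((√(2 * π * v))⁻¹ * rexp (-(c * (u - w) / (c^2 + 1) - 0)^2 / (2*v))))
      = ((c + 1/c)⁻¹ * ((√(2 * π * v))⁻¹ * (√(2 * π * v))⁻¹))
        * (rexp (-((c^2 * w + u) / (c^2 + 1) - m)^2 / (2*v))
          * rexp (-(c * (u - w) / (c^2 + 1) - 0)^2 / (2*v))) := by ring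
    _ = ((√(2 * π * ((1 + 1/c^2) * v)))⁻¹ * (√(2 * π * ((1 + c^2) * v)))⁻¹)
        * (rexp (-(w - m)^2 / (2 * ((1 + 1/c^2) * v)))
          * rexp (-(u - m)^2 / (2 * ((1 + c^2) * v)))) := by rw [hconst, hexp]
    _ = _ := by ring

lemma rotL_apply (c : ℝ) (p : ℝ × ℝ) : rotL c p = (p.1 - (1/c) * p.2, p.1 + c * p.2) := by
  rw [rotL, Matrix.toLin_finTwoProd_apply]
  ring_nf

lemma rotL_det (c : ℝ) : LinearMap.det (rotL c) = c + 1/c := by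
  rw [rotL, LinearMap.det_toLin, Matrix.det_fin_two_of]
  ring

lemma rotL_det_ne (c : ℝ) (hc : 0 < c) : LinearMap.det (rotL c) ≠ 0 := by
  rw [rotL_det]; positivity

/-- The rotation as a measurable equiv. -/
noncomputable def rotE (c : ℝ) (hc : 0 < c) : (ℝ × ℝ) ≃ᵐ (ℝ × ℝ) :=
  ((rotL c).equivOfDetNeZero (rotL_det_ne c hc)).toContinuousLinearEquiv.toHomeomorph.toMeasurableEquiv

lemma rotE_apply (c : ℝ) (hc : 0 < c) (p : ℝ × ℝ) :
    rotE c hc p = (p.1 - (1/c) * p.2, p.1 + c * p.2) := by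
  rw [← rotL_apply]; rfl

lemma rotE_symm_apply (c : ℝ) (hc : 0 < c) (p : ℝ × ℝ) :
    (rotE c hc).symm p = ((c^2 * p.1 + p.2) / (c^2 + 1), c * (p.2 - p.1) / (c^2 + 1)) := by
  have hc2 : c^2 + 1 ≠ 0 := by positivity
  apply (rotE c hc).injective
  rw [MeasurableEquiv.apply_symm_apply, rotE_apply]
  have hcne : c ≠ 0 := ne_of_gt hc
  apply Prod.ext <;> simp only <;> field_simp <;> ring

lemma map_withDensity_equiv {α β : Type*} [MeasurableSpace α] [MeasurableSpace β]
    (μ : Measure α) (e : α ≃ᵐ β) (ρ : β → ℝ≥0∞) (hρ : Measurable ρ) :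
    (μ.withDensity (ρ ∘ e)).map e = (μ.map e).withDensity ρ := by
  ext s hs
  rw [Measure.map_apply e.measurable hs, withDensity_apply _ (e.measurable hs),
    withDensity_apply _ hs, setLIntegral_map hs hρ e.measurable]
  rfl

lemma prod_gaussian_withDensity (m₁ m₂ : ℝ) {v₁ v₂ : NNReal} (h₁ : v₁ ≠ 0) (h₂ : v₂ ≠ 0) :
    (gaussianReal m₁ v₁).prod (gaussianReal m₂ v₂)
      = (volume : Measure (ℝ × ℝ)).withDensity
          (fun p => gaussianPDF m₁ v₁ p.1 * gaussianPDF m₂ v₂ p.2) := by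
  refine Measure.prod_eq fun s t hs ht => ?_
  rw [show (volume : Measure (ℝ × ℝ)) = (volume : Measure ℝ).prod volume from rfl,
    withDensity_apply _ (hs.prod ht), ← Measure.prod_restrict,
    lintegral_prod_mul ((measurable_gaussianPDF m₁ v₁).aemeasurable)
      ((measurable_gaussianPDF m₂ v₂).aemeasurable),
    gaussianReal_apply _ h₁ s, gaussianReal_apply _ h₂ t]

lemma pi_map_coordwise {n : ℕ} (e : (ℝ × ℝ) ≃ᵐ (ℝ × ℝ)) (κ : Fin n → Measure (ℝ × ℝ))
    [∀ i, IsProbabilityMeasure (κ i)] :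
    (Measure.pi κ).map (fun f i => e (f i)) = Measure.pi (fun i => (κ i).map e) := by
  have hinst : ∀ i, IsProbabilityMeasure ((κ i).map e) := fun i =>
    Measure.isProbabilityMeasure_map e.measurable.aemeasurable
  have hmeas : Measurable (fun f : Fin n → ℝ × ℝ => fun i => e (f i)) :=
    measurable_pi_lambda _ fun i => e.measurable.comp (measurable_pi_apply i)
  refine (Measure.pi_eq fun s hs => ?_).symm
  rw [Measure.map_apply hmeas (MeasurableSet.univ_pi fun i => (hs i))]
  have : (fun f : Fin n → ℝ × ℝ => fun i => e (f i)) ⁻¹' (univ.pi s)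
      = univ.pi (fun i => e ⁻¹' s i) := by
    ext f; simp [Set.mem_pi]
  rw [this, Measure.pi_pi]
  exact Finset.prod_congr rfl fun i _ =>
    (Measure.map_apply e.measurable (hs i)).symm

lemma pi_map_eval {n : ℕ} [NeZero n] (κ : Fin n → Measure ℝ)
    [∀ i, IsProbabilityMeasure (κ i)] (i : Fin n) :
    (Measure.pi κ).map (Function.eval i) = κ i := by
  ext s hs
  rw [Measure.map_apply (measurable_pi_apply i) hs, Set.eval_preimage, Measure.pi_pi]
  rw [Fintype.prod_eq_single i (fun j hj => by simp [Function.update_of_ne hj])]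
  simp

lemma gauss_rot (m : ℝ) {v : ℝ≥0} (hv : v ≠ 0) (c : ℝ) (hc : 0 < c) :
    ((gaussianReal m v).prod (gaussianReal 0 v)).map (rotE c hc)
      = (gaussianReal m (vW c hc v)).prod (gaussianReal m (vV c hc v)) := by
  have hd : (0:ℝ) < c + 1/c := by positivity
  set F : ℝ × ℝ → ℝ≥0∞ := fun p => gaussianPDF m v p.1 * gaussianPDF 0 v p.2 with hF
  have hFmeas : Measurable F :=
    ((measurable_gaussianPDF m v).comp measurable_fst).mul
      ((measurable_gaussianPDF 0 v).comp measurable_snd)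
  set ρ : ℝ × ℝ → ℝ≥0∞ := F ∘ (rotE c hc).symm with hρ
  have hρmeas : Measurable ρ := hFmeas.comp (rotE c hc).symm.measurable
  have hFρ : F = ρ ∘ (rotE c hc) := by
    funext p
    simp [hρ, Function.comp]
  rw [prod_gaussian_withDensity m 0 hv hv,
    show (fun p : ℝ×ℝ => gaussianPDF m v p.1 * gaussianPDF 0 v p.2)
      = ρ ∘ (rotE c hc) from hFρ]
  rw [map_withDensity_equiv volume (rotE c hc) ρ hρmeas]
  have hcoe : ⇑(rotE c hc) = ⇑(rotL c) := rfl
  have hmapvol : (volume : Measure (ℝ×ℝ)).map (rotE c hc)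
      = ENNReal.ofReal ((c + 1/c)⁻¹) • (volume : Measure (ℝ×ℝ)) := by
    rw [hcoe, Measure.map_linearMap_addHaar_eq_smul_addHaar volume (rotL_det_ne c hc),
      rotL_det, abs_of_pos (by positivity)]
  rw [hmapvol, withDensity_smul_measure, ← withDensity_smul _ hρmeas]
  rw [prod_gaussian_withDensity m m (vW_ne c hc hv) (vV_ne c hc hv)]
  congr 1
  funext p
  have hsymm := rotE_symm_apply c hc p
  simp only [Pi.smul_apply, smul_eq_mul, hρ, Function.comp, hF, hsymm, gaussianPDF]
  rw [← ENNReal.ofReal_mul (gaussianPDFReal_nonneg _ _ _),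
    ← ENNReal.ofReal_mul (by positivity : (0:ℝ) ≤ (c + 1/c)⁻¹),
    ← ENNReal.ofReal_mul (gaussianPDFReal_nonneg _ _ _)]
  · exact congrArg ENNReal.ofReal (density_identity m hv c hc p.1 p.2)

/-- Vector version of the rotation. -/
lemma gauss_rot_pi (n : ℕ) (μ : Fin n → ℝ) {v : ℝ≥0} (hv : v ≠ 0) (c : ℝ) (hc : 0 < c) :
    ((Measure.pi fun i => gaussianReal (μ i) v).prod
        (Measure.pi fun _ : Fin n => gaussianReal 0 v)).map
      (fun p : (Fin n → ℝ) × (Fin n → ℝ) =>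
        ((fun i => p.1 i - (1/c) * p.2 i), (fun i => p.1 i + c * p.2 i)))
      = (Measure.pi fun i => gaussianReal (μ i) (vW c hc v)).prod
          (Measure.pi fun i => gaussianReal (μ i) (vV c hc v)) := by
  set A := MeasurableEquiv.arrowProdEquivProdArrow ℝ ℝ (Fin n) with hA
  set κ : Fin n → Measure (ℝ × ℝ) := fun i => (gaussianReal (μ i) v).prod (gaussianReal 0 v)
  have h1 : ((Measure.pi fun i => gaussianReal (μ i) v).prod
      (Measure.pi fun _ : Fin n => gaussianReal 0 v)) = (Measure.pi κ).map A :=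
    (measurePreserving_arrowProdEquivProdArrow ℝ ℝ (Fin n)
      (fun i => gaussianReal (μ i) v) (fun _ => gaussianReal 0 v)).map_eq.symm
  have hΦmeas : Measurable (fun p : (Fin n → ℝ) × (Fin n → ℝ) =>
      ((fun i => p.1 i - (1/c) * p.2 i), (fun i => p.1 i + c * p.2 i))) := by
    apply Measurable.prodMk <;>
      exact measurable_pi_lambda _ fun i => by
        have h1 : Measurable fun p : (Fin n → ℝ) × (Fin n → ℝ) => p.1 i :=
          (measurable_pi_apply i).comp measurable_fst
        have h2 : Measurable fun p : (Fin n → ℝ) × (Fin n → ℝ) => p.2 i :=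
          (measurable_pi_apply i).comp measurable_snd
        fun_prop
  rw [h1, Measure.map_map hΦmeas A.measurable]
  have hcomp : (fun p : (Fin n → ℝ) × (Fin n → ℝ) =>
        ((fun i => p.1 i - (1/c) * p.2 i), (fun i => p.1 i + c * p.2 i))) ∘ A
      = A ∘ (fun f : Fin n → ℝ × ℝ => fun i => rotE c hc (f i)) := by
    funext f
    have : ∀ i, rotE c hc (f i) = ((f i).1 - (1/c) * (f i).2, (f i).1 + c * (f i).2) :=
      fun i => rotE_apply c hc (f i)
    simp only [Function.comp, hA, MeasurableEquiv.arrowProdEquivProdArrow,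
      Equiv.arrowProdEquivProdArrow, MeasurableEquiv.coe_mk, Equiv.coe_fn_mk, this]
  have hm : Measurable (fun f : Fin n → ℝ × ℝ => fun i => rotE c hc (f i)) :=
    measurable_pi_lambda _ fun i => (rotE c hc).measurable.comp (measurable_pi_apply i)
  rw [hcomp, ← Measure.map_map A.measurable hm]
  rw [pi_map_coordwise (rotE c hc) κ]
  have h2 : (fun i => (κ i).map (rotE c hc))
      = fun i => (gaussianReal (μ i) (vW c hc v)).prod (gaussianReal (μ i) (vV c hc v)) := by
    funext i; exact gauss_rot (μ i) hv c hc
  rw [h2]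
  exact (measurePreserving_arrowProdEquivProdArrow ℝ ℝ (Fin n)
    (fun i => gaussianReal (μ i) (vW c hc v)) (fun i => gaussianReal (μ i) (vV c hc v))).map_eq

lemma gauss_neg_map : (gaussianReal 0 1).map (fun x : ℝ => -x) = gaussianReal 0 1 := by
  have := gaussianReal_map_const_mul (μ := 0) (v := 1) (-1)
  simp only [neg_one_mul, mul_zero] at this
  rw [this]
  congr 1
  ext
  norm_num

lemma std_gauss_abs_le {α : ℝ} (z : ℝ) (hα : α ∈ Set.Ioo (0:ℝ) 1)
    (hz : gaussianReal 0 1 (Set.Iic z) = ENNReal.ofReal (1 - α / 2)) :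
    ENNReal.ofReal (1 - α) ≤ gaussianReal 0 1 {x : ℝ | |x| ≤ z} := by
  set G := gaussianReal 0 1 with hG
  have hset : {x : ℝ | |x| ≤ z} = Set.Iic z \ Set.Iio (-z) := by
    ext x
    simp only [Set.mem_setOf_eq, abs_le, Set.mem_diff, Set.mem_Iic, Set.mem_Iio, not_lt]
    constructor
    · rintro ⟨h1, h2⟩; exact ⟨h2, h1⟩
    · rintro ⟨h1, h2⟩; exact ⟨h2, h1⟩
  have hsing : G {z} = 0 :=
    gaussianReal_absolutelyContinuous 0 one_ne_zero (measure_singleton z)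
  have hIio : G (Set.Iio z) = ENNReal.ofReal (1 - α / 2) := by
    have h1 : G (Set.Iic z) ≤ G (Set.Iio z) + G {z} := by
      rw [show Set.Iic z = Set.Iio z ∪ {z} by ext x; simp [le_iff_lt_or_eq]]
      exact measure_union_le _ _
    rw [hsing, add_zero] at h1
    exact le_antisymm (hz ▸ measure_mono Set.Iio_subset_Iic_self) (hz ▸ h1)
  have hIci : G (Set.Ici z) = 1 - ENNReal.ofReal (1 - α / 2) := by
    rw [show Set.Ici z = (Set.Iio z)ᶜ by simp, measure_compl measurableSet_Iio
      (measure_ne_top _ _), hIio, measure_univ]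
  have hIicneg : G (Set.Iic (-z)) = 1 - ENNReal.ofReal (1 - α / 2) := by
    have : G (Set.Iic (-z)) = G ((fun x : ℝ => -x) ⁻¹' Set.Iic (-z)) := by
      conv_lhs => rw [hG, ← gauss_neg_map]
      rw [Measure.map_apply measurable_neg measurableSet_Iic]
    rw [this, show (fun x : ℝ => -x) ⁻¹' Set.Iic (-z) = Set.Ici z by
      ext x; simp, hIci]
  have hB : G (Set.Iio (-z)) ≤ ENNReal.ofReal (α / 2) := by
    calc G (Set.Iio (-z)) ≤ G (Set.Iic (-z)) := measure_mono Set.Iio_subset_Iic_self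
      _ = 1 - ENNReal.ofReal (1 - α / 2) := hIicneg
      _ = ENNReal.ofReal (α / 2) := by
          rw [← ENNReal.ofReal_one, ← ENNReal.ofReal_sub _ (by linarith [hα.2] : (0:ℝ) ≤ 1 - α/2)]
          norm_num
  rw [hset]
  have hle : G (Set.Iic z) ≤ G (Set.Iic z \ Set.Iio (-z)) + G (Set.Iio (-z)) := by
    calc G (Set.Iic z) ≤ G ((Set.Iic z \ Set.Iio (-z)) ∪ Set.Iio (-z)) := by
          apply measure_mono
          intro x hx
          by_cases h : x ∈ Set.Iio (-z)
          · exact Or.inr h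
          · exact Or.inl ⟨hx, h⟩
      _ ≤ _ := measure_union_le _ _
  have h2 : ENNReal.ofReal (1 - α / 2) ≤ G (Set.Iic z \ Set.Iio (-z)) + ENNReal.ofReal (α / 2) :=
    le_trans (hz ▸ hle) (add_le_add_right hB _)
  have h3 : ENNReal.ofReal (1 - α / 2) - ENNReal.ofReal (α / 2) = ENNReal.ofReal (1 - α) := by
    rw [← ENNReal.ofReal_sub _ (by linarith [hα.1] : (0:ℝ) ≤ α/2)]
    congr 1
    ring
  rw [← h3]
  exact tsub_le_iff_right.mpr h2

lemma coord_prob {σ c α : ℝ} (hσ : 0 < σ) (hc : 0 < c) (hα : α ∈ Set.Ioo (0:ℝ) 1)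
    (z : ℝ) (hz : gaussianReal 0 1 (Set.Iic z) = ENNReal.ofReal (1 - α / 2)) (m : ℝ) :
    ENNReal.ofReal (1 - α) ≤
      gaussianReal m (vW c hc (Real.toNNReal (σ ^ 2)))
        {t : ℝ | |t - m| ≤ σ * Real.sqrt (1 + 1 / c ^ 2) * z} := by
  set s0 : ℝ := σ * Real.sqrt (1 + 1 / c ^ 2) with hs0
  have hs0pos : 0 < s0 := by
    have : (0:ℝ) < Real.sqrt (1 + 1/c^2) := Real.sqrt_pos.mpr (by positivity)
    positivity
  have hvar : (⟨s0 ^ 2, sq_nonneg _⟩ : ℝ≥0) * 1 = vW c hc (Real.toNNReal (σ ^ 2)) := by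
    have h : s0 ^ 2 = (1 + 1/c^2) * σ^2 := by
      rw [hs0, mul_pow, Real.sq_sqrt (by positivity : (0:ℝ) ≤ 1 + 1/c^2)]
      ring
    ext
    simp [vW_coe, Real.coe_toNNReal _ (sq_nonneg σ), h]
  have hmap : gaussianReal m (vW c hc (Real.toNNReal (σ ^ 2)))
      = ((gaussianReal 0 1).map (fun x => s0 * x)).map (fun x => x + m) := by
    rw [gaussianReal_map_const_mul s0, gaussianReal_map_add_const m, mul_zero, zero_add]
    congr 1
    exact hvar.symm
  have hsetm : MeasurableSet {t : ℝ | |t - m| ≤ s0 * z} :=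
    measurableSet_le ((measurable_id.sub_const m).abs) measurable_const
  rw [hmap, Measure.map_apply (measurable_add_const m) hsetm,
    Measure.map_apply (measurable_const_mul s0) ((measurable_add_const m) hsetm)]
  have : (fun x => s0 * x) ⁻¹' ((fun x => x + m) ⁻¹' {t : ℝ | |t - m| ≤ s0 * z})
      = {x : ℝ | |x| ≤ z} := by
    ext x
    simp only [Set.mem_preimage, Set.mem_setOf_eq, add_sub_cancel_right, abs_mul,
      abs_of_pos hs0pos]
    exact mul_le_mul_iff_right₀ hs0pos
  rw [this]
  exact std_gauss_abs_le z hα hz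

/-- the data-thinning interval
`[(Y - (1/c)ζ)_{S(Y)} ± σ√(1+1/c²) z_{1-α/2}]` has unconditional selective coverage
`1-α` for `μ_{S(Y)}`, where `S(Y) = argmax_i (Yᵢ + cζᵢ)`. -/
theorem thinning_winners_curse_coverage
    {Ω : Type*} [MeasurableSpace Ω] (P : Measure Ω) [IsProbabilityMeasure P]
    (n : ℕ) [NeZero n] (μ : Fin n → ℝ) (σ c α : ℝ) (hσ : 0 < σ) (hc : 0 < c)
    (hα : α ∈ Set.Ioo (0 : ℝ) 1)
    (Y ζ : Ω → Fin n → ℝ) (hY : Measurable Y) (hζ : Measurable ζ)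
    (hYlaw : P.map Y = gaussianPi n μ (Real.toNNReal (σ ^ 2)))
    (hζlaw : P.map ζ = gaussianPi n (fun _ => 0) (Real.toNNReal (σ ^ 2)))
    (hindep : IndepFun Y ζ P)
    -- S(Y) is an argmax of Y + cζ, and depends on Y only through Y + cζ
    (g : (Fin n → ℝ) → Fin n) (hg : Measurable g)
    (hgmax : ∀ x : Fin n → ℝ, ∀ i, x i ≤ x (g x))
    (S : Ω → Fin n) (hS : S = fun ω => g fun i => Y ω i + c * ζ ω i)
    -- z_{1-α/2}: the (1-α/2) standard normal quantile
    (z : ℝ) (hz : gaussianReal 0 1 (Set.Iic z) = ENNReal.ofReal (1 - α / 2)) :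
    ENNReal.ofReal (1 - α) ≤
      P {ω | |(Y ω (S ω) - (1 / c) * ζ ω (S ω)) - μ (S ω)| ≤
        σ * Real.sqrt (1 + 1 / c ^ 2) * z} := by
  set v : ℝ≥0 := Real.toNNReal (σ ^ 2) with hvdef
  have hv0 : v ≠ 0 := by
    simp only [hvdef, ne_eq, Real.toNNReal_eq_zero, not_le]
    positivity
  set r : ℝ := σ * Real.sqrt (1 + 1 / c ^ 2) * z with hr
  -- the joint law of (Y, ζ)
  have hjoint : P.map (fun ω => (Y ω, ζ ω))
      = (Measure.pi fun i => gaussianReal (μ i) v).prod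
          (Measure.pi fun _ : Fin n => gaussianReal 0 v) := by
    rw [(indepFun_iff_map_prod_eq_prod_map_map hY.aemeasurable hζ.aemeasurable).mp hindep,
      hYlaw, hζlaw]
    rfl
  -- the rotation map
  set Φ : (Fin n → ℝ) × (Fin n → ℝ) → (Fin n → ℝ) × (Fin n → ℝ) :=
    fun p => ((fun i => p.1 i - (1/c) * p.2 i), (fun i => p.1 i + c * p.2 i)) with hΦ
  have hΦmeas : Measurable Φ := by
    apply Measurable.prodMk <;>
      exact measurable_pi_lambda _ fun i => by
        have h1 : Measurable fun p : (Fin n → ℝ) × (Fin n → ℝ) => p.1 i :=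
          (measurable_pi_apply i).comp measurable_fst
        have h2 : Measurable fun p : (Fin n → ℝ) × (Fin n → ℝ) => p.2 i :=
          (measurable_pi_apply i).comp measurable_snd
        fun_prop
  set W : Ω → Fin n → ℝ := fun ω i => Y ω i - (1/c) * ζ ω i with hW
  set V : Ω → Fin n → ℝ := fun ω i => Y ω i + c * ζ ω i with hV
  have hWmeas : Measurable W := measurable_pi_lambda _ fun i => by
    have h1 : Measurable fun ω => Y ω i := (measurable_pi_apply i).comp hY
    have h2 : Measurable fun ω => ζ ω i := (measurable_pi_apply i).comp hζ
    fun_prop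
  have hVmeas : Measurable V := measurable_pi_lambda _ fun i => by
    have h1 : Measurable fun ω => Y ω i := (measurable_pi_apply i).comp hY
    have h2 : Measurable fun ω => ζ ω i := (measurable_pi_apply i).comp hζ
    fun_prop
  have hpair : (fun ω => (W ω, V ω)) = Φ ∘ (fun ω => (Y ω, ζ ω)) := rfl
  -- law of (W, V)
  have hlawWV : P.map (fun ω => (W ω, V ω))
      = (Measure.pi fun i => gaussianReal (μ i) (vW c hc v)).prod
          (Measure.pi fun i => gaussianReal (μ i) (vV c hc v)) := by
    rw [hpair, ← Measure.map_map hΦmeas (hY.prodMk hζ), hjoint]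
    exact gauss_rot_pi n μ hv0 c hc
  -- the event as a preimage
  set C : Set ((Fin n → ℝ) × (Fin n → ℝ)) :=
    {p | |p.1 (g p.2) - μ (g p.2)| ≤ r} with hC
  have hsetm : ∀ i : Fin n,
      MeasurableSet {p : (Fin n → ℝ) × (Fin n → ℝ) | |p.1 i - μ i| ≤ r} := fun i =>
    measurableSet_le (by fun_prop)
      measurable_const
  have hCmeas : MeasurableSet C := by
    have hCu : C = ⋃ i, ((fun p : (Fin n → ℝ) × (Fin n → ℝ) => g p.2) ⁻¹' {i}
        ∩ {p | |p.1 i - μ i| ≤ r}) := by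
      ext p
      simp only [hC, Set.mem_setOf_eq, Set.mem_iUnion, Set.mem_inter_iff, Set.mem_preimage,
        Set.mem_singleton_iff]
      constructor
      · intro h; exact ⟨g p.2, rfl, h⟩
      · rintro ⟨i, h1, h2⟩; rw [h1]; exact h2
    rw [hCu]
    exact MeasurableSet.iUnion fun i =>
      ((hg.comp measurable_snd) (measurableSet_singleton i)).inter (hsetm i)
  have hEvent : {ω | |(Y ω (S ω) - (1 / c) * ζ ω (S ω)) - μ (S ω)| ≤ r}
      = (fun ω => (W ω, V ω)) ⁻¹' C := by
    subst hS
    rfl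
  rw [hEvent, ← Measure.map_apply (hWmeas.prodMk hVmeas) hCmeas, hlawWV,
    Measure.prod_apply_symm hCmeas]
  -- lower bound the inner measure uniformly
  have hinner : ∀ u : Fin n → ℝ, ENNReal.ofReal (1 - α)
      ≤ (Measure.pi fun i => gaussianReal (μ i) (vW c hc v))
          ((fun w => (w, u)) ⁻¹' C) := by
    intro u
    have hsec : (fun w : Fin n → ℝ => (w, u)) ⁻¹' C
        = Function.eval (g u) ⁻¹' {t : ℝ | |t - μ (g u)| ≤ r} := rfl
    have hsm : MeasurableSet {t : ℝ | |t - μ (g u)| ≤ r} :=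
      measurableSet_le ((measurable_id.sub_const _).abs) measurable_const
    rw [hsec, ← Measure.map_apply (measurable_pi_apply (g u)) hsm,
      pi_map_eval (fun i => gaussianReal (μ i) (vW c hc v)) (g u)]
    exact coord_prob hσ hc hα z hz (μ (g u))
  calc ENNReal.ofReal (1 - α)
      = ∫⁻ _u : Fin n → ℝ, ENNReal.ofReal (1 - α)
          ∂(Measure.pi fun i => gaussianReal (μ i) (vV c hc v)) := by
        rw [lintegral_const, measure_univ, mul_one]
    _ ≤ _ := lintegral_mono fun u => hinner u
end
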